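/- arXiv:1607.03698 — 7 statements merged into one kernel-verified Lean document; each statement's English description precedes it below -/
import Mathlib

section
/- For every b ≥ 0, the random vector V(b) = (V_1(b), …, V_n(b)) of leave-one-out estimates lies almost surely in the scaled regular permutohedron Π_n; equivalently, with probability one the vector V(b) is contained in the convex hull of all permutations of the vector (1, (n−2)/(n−1), (n−3)/(n−1), …, 1/(n−1), 0). -/
open MeasureTheory ProbabilityTheory

/-- The permutohedron `P_m(x)`: the convex hull of all vectors obtained from `x`
by permuting its coordinates. -/
noncomputable def permutohedron (m : ℕ) (x : Fin m → ℝ) : Set (Fin m → ℝ) :=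
  convexHull ℝ {y | ∃ σ : Equiv.Perm (Fin m), ∀ i, y i = x (σ i)}

/-- `K_b`: scaled kernel distribution function, with `K_0(z) = 1{z ≥ 0}`. -/
noncomputable def scaledKernelDF (K : ℝ → ℝ) (b : ℝ) (z : ℝ) : ℝ :=
  if 0 < b then K (z / b) else if 0 ≤ z then 1 else 0

/-!
Almost surely the observations are pairwise distinct (independence and an atomless law), and
then the symmetry of `k` gives `K_b(z) + K_b(-z) = 1` for `z ≠ 0`: the matrix
`a i j = K_b(X_i - X_j)` is a fractional tournament, nonnegative with `a i j + a j i = 1` off the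
diagonal. Its score vector lies in the permutohedron of `(n-1, …, 1, 0)`. By Hahn–Banach it
suffices to dominate every linear functional `c` at some vertex; take the vertex ranking the
coordinates in the order of `c`. The difference `b` between `a` and the transitive tournament of
that ranking is antisymmetric with `(c i - c j) * b i j ≤ 0`, so the functional is smaller at the
score vector.
-/

open Finset
open scoped Pointwise

theorem mem_convexHull_of_forall_exists_le {E : Type*} [TopologicalSpace E] [AddCommGroup E]
    [IsTopologicalAddGroup E] [Module ℝ E] [ContinuousSMul ℝ E] [LocallyConvexSpace ℝ E]
    [T2Space E] {s : Set E} (hs : s.Finite) {x : E}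
    (h : ∀ l : StrongDual ℝ E, ∃ y ∈ s, l x ≤ l y) : x ∈ convexHull ℝ s := by
  rw [← iInter_halfSpaces_eq (convex_convexHull ℝ s) (hs.isClosed_convexHull (𝕜 := ℝ))]
  exact Set.mem_iInter.2 fun l => (h l).imp fun y hy => ⟨subset_convexHull ℝ s hy.1, hy.2⟩

theorem permutohedron_smul (m : ℕ) (r : ℝ) (x : Fin m → ℝ) :
    permutohedron m (r • x) = r • permutohedron m x := by
  unfold permutohedron
  rw [← convexHull_smul]
  congr 1
  ext y
  simp only [Set.mem_smul_set, Set.mem_ofPred_eq, Pi.smul_apply, smul_eq_mul]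
  constructor
  · rintro ⟨σ, hσ⟩
    exact ⟨fun i => x (σ i), ⟨σ, fun _ => rfl⟩, funext fun i => (hσ i).symm⟩
  · rintro ⟨z, ⟨σ, hσ⟩, rfl⟩
    exact ⟨σ, fun i => by simp [hσ]⟩

theorem finite_setOf_exists_perm (m : ℕ) (x : Fin m → ℝ) :
    {y : Fin m → ℝ | ∃ σ : Equiv.Perm (Fin m), ∀ i, y i = x (σ i)}.Finite :=
  (Set.finite_range fun σ : Equiv.Perm (Fin m) => x ∘ σ).subset
    fun _ ⟨σ, hσ⟩ => ⟨σ, (funext hσ).symm⟩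

theorem sum_mul_sum_nonpos_of_antisymm {ι : Type*} [Fintype ι] (c : ι → ℝ) (b : ι → ι → ℝ)
    (hanti : ∀ i j, b j i = -b i j) (hle : ∀ i j, (c i - c j) * b i j ≤ 0) :
    ∑ i, c i * ∑ j, b i j ≤ 0 := by
  simp only [mul_sum]
  have hswap : ∑ i, ∑ j, c j * b i j = -∑ i, ∑ j, c i * b i j := by
    rw [sum_comm]
    simp only [← sum_neg_distrib]
    exact sum_congr rfl fun i _ => sum_congr rfl fun j _ => by rw [hanti]; ring
  have htwice : 2 * ∑ i, ∑ j, c i * b i j = ∑ i, ∑ j, (c i - c j) * b i j := by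
    simp only [sub_mul, sum_sub_distrib, hswap]
    ring
  have hnonpos : ∑ i, ∑ j, (c i - c j) * b i j ≤ 0 :=
    sum_nonpos fun i _ => sum_nonpos fun j _ => hle i j
  linarith

theorem sum_mul_score_le {ι α : Type*} [Fintype ι] [DecidableEq ι] [LinearOrder α]
    (a : ι → ι → ℝ) (h0 : ∀ i j, 0 ≤ a i j) (hsum : ∀ i j, i ≠ j → a i j + a j i = 1)
    (c : ι → ℝ) (r : ι → α) (hr : Function.Injective r) (hc : ∀ i j, r i < r j → c i ≤ c j) :
    ∑ i, c i * ∑ j ∈ univ.erase i, a i j ≤ ∑ i, c i * #{j | r j < r i} := by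
  -- `a` minus the transitive tournament of the ranking `r`
  set b : ι → ι → ℝ := fun i j => (if i = j then 0 else a i j) - if r j < r i then 1 else 0
  have hb : ∀ i, ∑ j, b i j = ∑ j ∈ univ.erase i, a i j - #{j | r j < r i} := by
    intro i
    rw [sum_sub_distrib, sum_boole, ← filter_ne' univ i, sum_filter]
    simp only [eq_comm, ite_not]
  have hanti : ∀ i j, b j i = -b i j := by
    intro i j
    by_cases hij : i = j
    · simp [b, hij]
    rcases lt_or_gt_of_ne (hr.ne hij) with hlt | hlt
    all_goals simp [b, hij, Ne.symm hij, hlt, hlt.not_gt]; linarith [hsum i j hij]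
  have hle : ∀ i j, (c i - c j) * b i j ≤ 0 := by
    intro i j
    by_cases hij : i = j
    · simp [b, hij]
    rcases lt_or_gt_of_ne (hr.ne hij) with hlt | hlt
    · simp only [b, hij, hlt.not_gt, if_false, sub_zero]
      exact mul_nonpos_of_nonpos_of_nonneg (sub_nonpos.2 (hc i j hlt)) (h0 i j)
    · simp only [b, hij, hlt, if_false, if_true]
      exact mul_nonpos_of_nonneg_of_nonpos (sub_nonneg.2 (hc j i hlt))
        (by linarith [hsum i j hij, h0 j i])
  have := sum_mul_sum_nonpos_of_antisymm c b hanti hle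
  simp only [hb, mul_sub, sum_sub_distrib] at this
  linarith

theorem Fin.card_filter_perm_apply_lt {m : ℕ} (π : Equiv.Perm (Fin m)) (i : Fin m) :
    #{j | π j < π i} = π i := by
  rw [card_equiv π (t := Iio (π i)) (by simp), Fin.card_Iio]

theorem score_mem_permutohedron {m : ℕ} (a : Fin m → Fin m → ℝ) (h0 : ∀ i j, 0 ≤ a i j)
    (hsum : ∀ i j, i ≠ j → a i j + a j i = 1) :
    (fun i => ∑ j ∈ univ.erase i, a i j) ∈ permutohedron m (fun i => (m : ℝ) - 1 - (i : ℕ)) := by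
  refine mem_convexHull_of_forall_exists_le
    (finite_setOf_exists_perm m fun i => (m : ℝ) - 1 - (i : ℕ)) fun l => ?_
  set c : Fin m → ℝ := fun i => l fun j => if i = j then 1 else 0
  have hl : ∀ z, l z = ∑ i, c i * z i := fun z => by
    rw [← l.coe_coe, l.toLinearMap.pi_apply_eq_sum_univ]
    exact sum_congr rfl fun i _ => mul_comm _ _
  set π := (Tuple.sort c)⁻¹
  have hc : ∀ i j, π i < π j → c i ≤ c j := fun i j hij => by
    simpa [π] using Tuple.monotone_sort c hij.le
  refine ⟨fun i => (π i : ℕ), ⟨π.trans Fin.revPerm, fun i => ?_⟩, ?_⟩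
  · have := (π i).isLt
    simp only [Equiv.trans_apply, Fin.revPerm_apply, Fin.val_rev]
    push_cast [Nat.cast_sub (by omega : (π i : ℕ) + 1 ≤ m)]
    ring
  · simpa only [hl, Fin.card_filter_perm_apply_lt] using
      sum_mul_score_le a h0 hsum c π π.injective hc

theorem integral_Iio_add_integral_Iio_neg {k : ℝ → ℝ} (hk : Integrable k)
    (hsym : ∀ x, k (-x) = k x) (z : ℝ) :
    (∫ t in Set.Iio z, k t) + ∫ t in Set.Iio (-z), k t = ∫ t, k t := by
  have hneg : ∫ t in Set.Iio (-z), k t = ∫ t in Set.Ioi z, k t := by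
    rw [setIntegral_congr_set Iio_ae_eq_Iic, ← integral_comp_neg_Ioi]
    simp only [hsym]
  rw [hneg, setIntegral_congr_set Iio_ae_eq_Iic]
  exact intervalIntegral.integral_Iic_add_Ioi hk.integrableOn hk.integrableOn

theorem scaledKernelDF_nonneg {K : ℝ → ℝ} (hK : ∀ z, 0 ≤ K z) (b z : ℝ) :
    0 ≤ scaledKernelDF K b z := by
  unfold scaledKernelDF
  split_ifs <;> first | exact hK _ | norm_num

theorem scaledKernelDF_add_scaledKernelDF_neg {K : ℝ → ℝ} (hK : ∀ z, K z + K (-z) = 1)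
    (b : ℝ) {z : ℝ} (hz : z ≠ 0) : scaledKernelDF K b z + scaledKernelDF K b (-z) = 1 := by
  by_cases hb : 0 < b
  · simp only [scaledKernelDF, if_pos hb, neg_div]
    exact hK _
  · rcases hz.lt_or_gt with hz | hz <;> simp [scaledKernelDF, hb, hz.not_ge, hz.le]

theorem MeasureTheory.Measure.prod_diagonal_eq_zero {α : Type*} [MeasurableSpace α]
    [MeasurableEq α] {ν μ : Measure α} [SFinite μ] [NullSingletonClass μ] :
    ν.prod μ (Set.diagonal α) = 0 := by
  rw [Measure.prod_apply measurableSet_diagonal]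
  simp [Set.preimage]

theorem ProbabilityTheory.IndepFun.ae_ne {Ω α : Type*} [MeasurableSpace Ω] [MeasurableSpace α]
    [MeasurableEq α] {μ : Measure Ω} [IsFiniteMeasure μ] {X Y : Ω → α} (hXY : IndepFun X Y μ)
    (hX : Measurable X) (hY : Measurable Y) [NullSingletonClass (μ.map Y)] :
    ∀ᵐ ω ∂μ, X ω ≠ Y ω := by
  have hmap := (indepFun_iff_map_prod_eq_prod_map_map hX.aemeasurable hY.aemeasurable).1 hXY
  rw [ae_iff]
  simp only [ne_eq, not_not]
  rw [show {ω | X ω = Y ω} = (fun ω => (X ω, Y ω)) ⁻¹' Set.diagonal α from rfl,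
    ← Measure.map_apply (hX.prodMk hY) measurableSet_diagonal, hmap]
  exact Measure.prod_diagonal_eq_zero

theorem ProbabilityTheory.iIndepFun.ae_pairwise_ne {Ω ι α : Type*} [MeasurableSpace Ω]
    [MeasurableSpace α] [MeasurableEq α] [Countable ι] {μ : Measure Ω} [IsProbabilityMeasure μ]
    {X : ι → Ω → α} (hX : iIndepFun X μ) (hXm : ∀ i, Measurable (X i))
    [∀ i, NullSingletonClass (μ.map (X i))] :
    ∀ᵐ ω ∂μ, Pairwise fun i j => X i ω ≠ X j ω := by
  simp only [Pairwise, ae_all_iff]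
  intro i j hij
  exact (hX.indepFun hij).ae_ne (hXm i) (hXm j)

theorem stmt0_general {Ω : Type*} [MeasurableSpace Ω] (μ : Measure Ω) [IsProbabilityMeasure μ]
    (n : ℕ) (X : Fin n → Ω → ℝ) (hXm : ∀ i, Measurable (X i))
    (hindep : iIndepFun X μ)
    (f : ℝ → ℝ)
    (hfX : ∀ i, μ.map (X i) = volume.withDensity fun x => ENNReal.ofReal (f x))
    (k : ℝ → ℝ) (hk0 : ∀ x, 0 ≤ k x)
    (hksym : ∀ x, k (-x) = k x) (hk1 : ∫ x, k x = 1)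
    (b : ℝ) :
    ∀ᵐ ω ∂μ,
      (fun i : Fin n => ((n : ℝ) - 1)⁻¹ *
          ∑ j ∈ Finset.univ.erase i,
            scaledKernelDF (fun x => ∫ t in Set.Iio x, k t) b (X i ω - X j ω))
        ∈ permutohedron n (fun i => ((n : ℝ) - 1 - (i : ℕ)) / ((n : ℝ) - 1)) := by
  have hk : Integrable k := Integrable.of_integral_ne_zero (by simp [hk1])
  set K : ℝ → ℝ := fun x => ∫ t in Set.Iio x, k t
  have hK0 : ∀ z, 0 ≤ K z := fun z => setIntegral_nonneg measurableSet_Iio fun x _ => hk0 x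
  have hK1 : ∀ z, K z + K (-z) = 1 := fun z =>
    (integral_Iio_add_integral_Iio_neg hk hksym z).trans hk1
  have : ∀ i, NullSingletonClass (μ.map (X i)) := fun i => hfX i ▸ inferInstance
  filter_upwards [hindep.ae_pairwise_ne hXm] with ω hω
  have hscore := score_mem_permutohedron (fun i j => scaledKernelDF K b (X i ω - X j ω))
    (fun _ _ => scaledKernelDF_nonneg hK0 _ _) fun i j hij => by
      simpa only [neg_sub] using
        scaledKernelDF_add_scaledKernelDF_neg hK1 b (sub_ne_zero.2 (hω hij))
  have hvertex : (fun i : Fin n => ((n : ℝ) - 1 - (i : ℕ)) / ((n : ℝ) - 1))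
      = ((n : ℝ) - 1)⁻¹ • fun i : Fin n => (n : ℝ) - 1 - (i : ℕ) := by
    ext i
    simp [div_eq_inv_mul]
  rw [hvertex, permutohedron_smul]
  exact Set.smul_mem_smul_set hscore

/-- for i.i.d. observations `X_1, …, X_n` (`n ≥ 2`) with an absolutely
continuous distribution (bounded density `f`), a kernel `k` as in Assumption 2(a)
with `K(x) = ∫_{-∞}^x k`, and any `b ≥ 0`, the vector of leave-one-out estimates
`V(b) = (V_1(b), …, V_n(b))`, `V_i(b) = (n-1)⁻¹ ∑_{j ≠ i} K_b(X_i - X_j)`, lies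
almost surely in the scaled regular permutohedron
`Π_n = P_n(1, (n-2)/(n-1), …, 1/(n-1), 0)`. -/
theorem stmt0 {Ω : Type*} [MeasurableSpace Ω] (μ : Measure Ω) [IsProbabilityMeasure μ]
    (n : ℕ) (hn : 2 ≤ n) (X : Fin n → Ω → ℝ) (hXm : ∀ i, Measurable (X i))
    (hindep : iIndepFun X μ)
    (f : ℝ → ℝ) (hf0 : ∀ x, 0 ≤ f x) (hfbd : ∃ M, ∀ x, f x ≤ M)
    (hfX : ∀ i, μ.map (X i) = volume.withDensity fun x => ENNReal.ofReal (f x))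
    (k : ℝ → ℝ) (hkm : Measurable k) (hk0 : ∀ x, 0 ≤ k x)
    (hkbd : ∃ M, ∀ x, k x ≤ M) (hksym : ∀ x, k (-x) = k x) (hk1 : ∫ x, k x = 1)
    (b : ℝ) (hb : 0 ≤ b) :
    ∀ᵐ ω ∂μ,
      (fun i : Fin n => ((n : ℝ) - 1)⁻¹ *
          ∑ j ∈ Finset.univ.erase i,
            scaledKernelDF (fun x => ∫ t in Set.Iio x, k t) b (X i ω - X j ω))
        ∈ permutohedron n (fun i => ((n : ℝ) - 1 - (i : ℕ)) / ((n : ℝ) - 1)) :=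
  stmt0_general μ n X hXm hindep f hfX k hk0 hksym hk1 b
end

section
/- Let n ≥ 2, let X_1, …, X_n be i.i.d. real random variables with absolutely continuous distribution function, let K be the distribution function of a symmetric kernel so that K(−z) = 1 − K(z), and let V_i(b) = (n−1)^{−1} Σ_{j≠i} K_b(X_i − X_j). If 0 < Var(V_1(b)) < ∞, then for every i ≠ j the correlation of V_i(b) and V_j(b) equals −1/(n−1). -/
/-!
Since `K(z) + K(-z) = 1`, the terms `K_b(X_i - X_j)` and `K_b(X_j - X_i)` add up to one, so
`∑ i, V_i = n / 2` identically. Permuting the sample permutes the `V_i`, and the law of an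
i.i.d. sample is permutation invariant, so the family `(V_i)` is exchangeable. For an
exchangeable family with constant sum, `0 = Cov(V_i, ∑ l, V_l) = Var(V_i) + (n - 1) Cov(V_i, V_j)`.
-/

open MeasureTheory ProbabilityTheory

namespace ProbabilityTheory

variable {Ω ι β : Type*} [MeasurableSpace Ω] [MeasurableSpace β] {μ : Measure Ω}

def Exchangeable (Y : ι → Ω → β) (μ : Measure Ω) : Prop :=
  ∀ σ : Equiv.Perm ι, μ.map (fun ω i ↦ Y (σ i) ω) = μ.map (fun ω i ↦ Y i ω)

theorem iIndepFun.exchangeable [Fintype ι] {X : ι → Ω → β} (hX : ∀ i, AEMeasurable (X i) μ)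
    (hindep : iIndepFun X μ) (hident : ∀ i j, μ.map (X i) = μ.map (X j)) :
    Exchangeable X μ := by
  intro σ
  rw [(hindep.precomp σ.injective).map_fun_eq_pi_map fun i ↦ hX (σ i),
    hindep.map_fun_eq_pi_map hX]
  exact congrArg Measure.pi (funext fun i ↦ hident (σ i) i)

theorem Exchangeable.comp_equivariant {γ : Type*} [MeasurableSpace γ] {X : ι → Ω → β}
    (hX : Exchangeable X μ) (hXm : ∀ i, Measurable (X i)) {G : ι → (ι → β) → γ}
    (hGm : ∀ i, Measurable (G i))
    (hG : ∀ (σ : Equiv.Perm ι) i x, G i (fun l ↦ x (σ l)) = G (σ i) x) :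
    Exchangeable (fun i ω ↦ G i fun l ↦ X l ω) μ := by
  intro σ
  have hGv : Measurable fun (x : ι → β) i ↦ G i x := measurable_pi_lambda _ hGm
  calc μ.map (fun ω i ↦ G (σ i) fun l ↦ X l ω)
      = (μ.map fun ω l ↦ X (σ l) ω).map fun x i ↦ G i x := by
        rw [Measure.map_map hGv (measurable_pi_lambda _ fun l ↦ hXm (σ l))]
        congr 1
        funext ω i
        exact (hG σ i fun l ↦ X l ω).symm
    _ = (μ.map fun ω l ↦ X l ω).map fun x i ↦ G i x := by rw [hX σ]
    _ = μ.map fun ω i ↦ G i fun l ↦ X l ω := by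
        rw [Measure.map_map hGv (measurable_pi_lambda _ hXm)]
        rfl

theorem Exchangeable.covariance_comp_perm {Y : ι → Ω → ℝ} (hY : Exchangeable Y μ)
    (hYm : ∀ i, Measurable (Y i)) (σ : Equiv.Perm ι) (i j : ι) :
    cov[Y (σ i), Y (σ j); μ] = cov[Y i, Y j; μ] := by
  have hmap : ∀ Z : ι → Ω → ℝ, (∀ l, Measurable (Z l)) → cov[Z i, Z j; μ]
      = cov[fun y ↦ y i, fun y ↦ y j; μ.map fun ω l ↦ Z l ω] := fun Z hZ ↦
    (covariance_map_fun (measurable_pi_apply i).aestronglyMeasurable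
      (measurable_pi_apply j).aestronglyMeasurable (measurable_pi_lambda _ hZ).aemeasurable).symm
  rw [hmap _ fun l ↦ hYm (σ l), hmap Y hYm, hY σ]

theorem Exchangeable.variance_eq [DecidableEq ι] {Y : ι → Ω → ℝ} (hY : Exchangeable Y μ)
    (hYm : ∀ i, Measurable (Y i)) (i j : ι) : Var[Y i; μ] = Var[Y j; μ] := by
  rw [← covariance_self (hYm i).aemeasurable, ← covariance_self (hYm j).aemeasurable,
    ← hY.covariance_comp_perm hYm (Equiv.swap i j), Equiv.swap_apply_left]

theorem Exchangeable.card_sub_one_mul_covariance [Fintype ι] [DecidableEq ι]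
    [IsProbabilityMeasure μ] {Y : ι → Ω → ℝ} (hY : Exchangeable Y μ)
    (hYm : ∀ i, Measurable (Y i)) (hYL2 : ∀ i, MemLp (Y i) 2 μ) {c : ℝ}
    (hsum : ∀ ω, ∑ i, Y i ω = c) {i j : ι} (hij : i ≠ j) :
    (Fintype.card ι - 1 : ℝ) * cov[Y i, Y j; μ] = -Var[Y i; μ] := by
  have hoff : ∀ b ∈ Finset.univ.erase i, cov[Y b, Y i; μ] = cov[Y j, Y i; μ] := by
    intro b hb
    have := hY.covariance_comp_perm hYm (Equiv.swap j b) j i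
    rwa [Equiv.swap_apply_left, Equiv.swap_apply_of_ne_of_ne hij (Finset.ne_of_mem_erase hb).symm]
      at this
  have htotal : Var[Y i; μ] + (Fintype.card ι - 1 : ℝ) * cov[Y i, Y j; μ] = 0 :=
    calc Var[Y i; μ] + (Fintype.card ι - 1 : ℝ) * cov[Y i, Y j; μ]
        = ∑ b, cov[Y b, Y i; μ] := by
          rw [← Finset.add_sum_erase _ _ (Finset.mem_univ i), Finset.sum_congr rfl hoff,
            Finset.sum_const, nsmul_eq_mul, Finset.cast_card_erase_of_mem (Finset.mem_univ i),
            covariance_self (hYm i).aemeasurable, covariance_comm, Finset.card_univ]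
      _ = cov[fun ω ↦ ∑ b, Y b ω, Y i; μ] := (covariance_fun_sum_left hYL2 (hYL2 i)).symm
      _ = 0 := by simp_rw [hsum]; exact covariance_const_left c
  linarith

theorem Exchangeable.correlation_eq_of_sum_eq_const [Fintype ι] [DecidableEq ι]
    [IsProbabilityMeasure μ] {Y : ι → Ω → ℝ} (hY : Exchangeable Y μ)
    (hYm : ∀ i, Measurable (Y i)) (hYL2 : ∀ i, MemLp (Y i) 2 μ) {c : ℝ}
    (hsum : ∀ ω, ∑ i, Y i ω = c) {i j : ι} (hij : i ≠ j) (hvar : Var[Y i; μ] ≠ 0) :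
    cov[Y i, Y j; μ] / (√Var[Y i; μ] * √Var[Y j; μ]) = -(1 / (Fintype.card ι - 1 : ℝ)) := by
  have hcov := hY.card_sub_one_mul_covariance hYm hYL2 hsum hij
  have hcard : (Fintype.card ι - 1 : ℝ) ≠ 0 := by
    rintro h
    rw [h, zero_mul] at hcov
    exact hvar (neg_eq_zero.mp hcov.symm)
  rw [← hY.variance_eq hYm i j, Real.mul_self_sqrt (variance_nonneg _ _)]
  field_simp
  linarith

end ProbabilityTheory

section KernelCDF

variable {k : ℝ → ℝ}

noncomputable def kernelCDF (k : ℝ → ℝ) (u : ℝ) : ℝ := ∫ t in Set.Iio u, k t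

theorem kernelCDF_nonneg (hk0 : ∀ x, 0 ≤ k x) (u : ℝ) : 0 ≤ kernelCDF k u :=
  setIntegral_nonneg measurableSet_Iio fun x _ ↦ hk0 x

theorem kernelCDF_le_one (hk0 : ∀ x, 0 ≤ k x) (hk1 : ∫ x, k x = 1) (u : ℝ) :
    kernelCDF k u ≤ 1 :=
  hk1 ▸ setIntegral_le_integral (.of_integral_ne_zero (by simp [hk1])) (ae_of_all _ hk0)

theorem monotone_kernelCDF (hk0 : ∀ x, 0 ≤ k x) (hk : Integrable k) : Monotone (kernelCDF k) :=
  fun _ _ huv ↦ setIntegral_mono_set hk.integrableOn (ae_of_all _ hk0)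
    (Set.Iio_subset_Iio huv).eventuallyLE

theorem kernelCDF_add_kernelCDF_neg (hksym : ∀ x, k (-x) = k x) (hk1 : ∫ x, k x = 1) (u : ℝ) :
    kernelCDF k u + kernelCDF k (-u) = 1 := by
  have hk : Integrable k := .of_integral_ne_zero (by simp [hk1])
  have hneg : kernelCDF k (-u) = ∫ t in Set.Ioi u, k t := by
    rw [kernelCDF, ← integral_Iic_eq_integral_Iio, ← integral_comp_neg_Ioi]
    simp only [hksym]
  rw [hneg, kernelCDF, ← integral_Iic_eq_integral_Iio,
    intervalIntegral.integral_Iic_add_Ioi hk.integrableOn hk.integrableOn, hk1]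

end KernelCDF

theorem Finset.sum_sum_erase_eq_of_add_swap_eq_one {ι : Type*} [Fintype ι] [DecidableEq ι]
    {a : ι → ι → ℝ} (ha : ∀ i j, a i j + a j i = 1) :
    ∑ i, ∑ j ∈ univ.erase i, a i j = Fintype.card ι * (Fintype.card ι - 1) / 2 := by
  have hfull : 2 * ∑ i, ∑ j, a i j = Fintype.card ι ^ 2 :=
    calc 2 * ∑ i, ∑ j, a i j = ∑ i, ∑ j, a i j + ∑ i, ∑ j, a j i := by
          rw [sum_comm (f := fun i j ↦ a j i)]; ring
      _ = Fintype.card ι ^ 2 := by simp [← sum_add_distrib, ha, sq]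
  have hdiag : ∀ i, a i i = 1 / 2 := fun i ↦ by linarith [ha i i]
  simp only [sum_erase_eq_sub (mem_univ _), hdiag, sum_sub_distrib, sum_const, card_univ,
    nsmul_eq_mul]
  linarith

section LeaveOneOut

variable {n : ℕ}

noncomputable def leaveOneOut (K : ℝ → ℝ) (b : ℝ) (i : Fin n) (x : Fin n → ℝ) : ℝ :=
  ((n : ℝ) - 1)⁻¹ * ∑ j ∈ Finset.univ.erase i, K ((x i - x j) / b)

theorem leaveOneOut_comp_perm (K : ℝ → ℝ) (b : ℝ) (σ : Equiv.Perm (Fin n)) (i : Fin n)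
    (x : Fin n → ℝ) : leaveOneOut K b i (fun l ↦ x (σ l)) = leaveOneOut K b (σ i) x := by
  unfold leaveOneOut
  congr 1
  exact Finset.sum_equiv σ (by simp) fun _ _ ↦ rfl

theorem measurable_leaveOneOut {K : ℝ → ℝ} (hK : Measurable K) (b : ℝ) (i : Fin n) :
    Measurable (leaveOneOut K b i) := by
  unfold leaveOneOut
  fun_prop

theorem leaveOneOut_mem_Icc {K : ℝ → ℝ} (hK : ∀ u, K u ∈ Set.Icc 0 1) (b : ℝ) (i : Fin n)
    (x : Fin n → ℝ) : leaveOneOut K b i x ∈ Set.Icc 0 1 := by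
  have hcard : ((Finset.univ.erase i).card : ℝ) = n - 1 := by
    rw [Finset.cast_card_erase_of_mem (Finset.mem_univ i)]
    simp
  have hn : (0 : ℝ) ≤ n - 1 := by
    rw [← hcard]
    positivity
  have hle : ∑ j ∈ Finset.univ.erase i, K ((x i - x j) / b) ≤ n - 1 :=
    calc ∑ j ∈ Finset.univ.erase i, K ((x i - x j) / b)
        ≤ ∑ j ∈ Finset.univ.erase i, (1 : ℝ) := Finset.sum_le_sum fun j _ ↦ (hK _).2
      _ = n - 1 := by rw [Finset.sum_const, nsmul_one, hcard]
  exact ⟨mul_nonneg (inv_nonneg.mpr hn) (Finset.sum_nonneg fun j _ ↦ (hK _).1),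
    inv_mul_le_one_of_le₀ hle hn⟩

theorem sum_leaveOneOut {K : ℝ → ℝ} (hK : ∀ u, K u + K (-u) = 1) (hn : n ≠ 1) (b : ℝ)
    (x : Fin n → ℝ) : ∑ i, leaveOneOut K b i x = n / 2 := by
  have hpairs := Finset.sum_sum_erase_eq_of_add_swap_eq_one (a := fun i j ↦ K ((x i - x j) / b))
    fun i j ↦ by simpa only [← neg_div, neg_sub] using hK ((x i - x j) / b)
  have hn' : (n : ℝ) - 1 ≠ 0 := sub_ne_zero.mpr (mod_cast hn)
  simp only [leaveOneOut, ← Finset.mul_sum, hpairs, Fintype.card_fin]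
  field_simp

end LeaveOneOut

/-- let `X_1, …, X_n` (`n ≥ 2`) be i.i.d. with an absolutely continuous
distribution (bounded density `f`), let `K` be the distribution function of a
symmetric kernel `k` (so that `K(-z) = 1 - K(z)`), and let
`V_i(b) = (n-1)⁻¹ ∑_{j ≠ i} K_b(X_i - X_j)`. If `0 < Var(V_1(b)) < ∞`, then for
every `i ≠ j`, `corr(V_i(b), V_j(b)) = -1/(n-1)`. -/
theorem stmt3 {Ω : Type*} [MeasurableSpace Ω] (μ : Measure Ω) [IsProbabilityMeasure μ]
    (n : ℕ) (hn : 2 ≤ n) (X : Fin n → Ω → ℝ) (hXm : ∀ i, Measurable (X i))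
    (hindep : iIndepFun X μ)
    (f : ℝ → ℝ)
    (hfX : ∀ i, μ.map (X i) = volume.withDensity fun x => ENNReal.ofReal (f x))
    (k : ℝ → ℝ) (hk0 : ∀ x, 0 ≤ k x)
    (hksym : ∀ x, k (-x) = k x) (hk1 : ∫ x, k x = 1)
    (b : ℝ)
    (V : Fin n → Ω → ℝ)
    (hV : ∀ i ω, V i ω = ((n : ℝ) - 1)⁻¹ *
        ∑ j ∈ Finset.univ.erase i, (∫ t in Set.Iio ((X i ω - X j ω) / b), k t))
    (hvar_pos : 0 < variance (V ⟨0, by omega⟩) μ) :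
    ∀ i j : Fin n, i ≠ j →
      (∫ ω, (V i ω - ∫ ω', V i ω' ∂μ) * (V j ω - ∫ ω', V j ω' ∂μ) ∂μ) /
          (Real.sqrt (variance (V i) μ) * Real.sqrt (variance (V j) μ))
        = -(1 / ((n : ℝ) - 1)) := by
  intro i j hij
  have hK : Measurable (kernelCDF k) :=
    (monotone_kernelCDF hk0 (.of_integral_ne_zero (by simp [hk1]))).measurable
  have hV' : V = fun i ω ↦ leaveOneOut (kernelCDF k) b i fun l ↦ X l ω :=
    funext fun i ↦ funext (hV i)
  have hVm : ∀ i, Measurable (V i) :=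
    hV' ▸ fun i ↦ (measurable_leaveOneOut hK b i).comp (measurable_pi_lambda _ hXm)
  have hVL2 : ∀ i, MemLp (V i) 2 μ := by
    refine fun i ↦ .of_bound (hVm i).aestronglyMeasurable 1 (ae_of_all _ fun ω ↦ ?_)
    have := leaveOneOut_mem_Icc (fun u ↦ ⟨kernelCDF_nonneg hk0 u, kernelCDF_le_one hk0 hk1 u⟩)
      b i fun l ↦ X l ω
    rw [Real.norm_eq_abs, abs_le, hV']
    exact ⟨by linarith [this.1], this.2⟩
  have hexch : Exchangeable V μ := hV' ▸ (hindep.exchangeable (fun i ↦ (hXm i).aemeasurable)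
    fun i j ↦ (hfX i).trans (hfX j).symm).comp_equivariant hXm (measurable_leaveOneOut hK b)
    (leaveOneOut_comp_perm _ b)
  have hsum : ∀ ω, ∑ i, V i ω = n / 2 := fun ω ↦ hV' ▸
    sum_leaveOneOut (kernelCDF_add_kernelCDF_neg hksym hk1) (by omega) b _
  have hvar := (hexch.variance_eq hVm _ i ▸ hvar_pos).ne'
  have := hexch.correlation_eq_of_sum_eq_const hVm hVL2 hsum hij hvar
  rwa [Fintype.card_fin] at this
end

section
/- Let X have distribution function F with density f possessing a bounded continuous fourth derivative, and let k be a kernel with μ_4(k) = ∫ x^4 k(x) dx < ∞. Then for each integer r ≥ 1 and each fixed x ∈ ℝ, as b → 0⁺, E[K_b(x − X)^r] = F(x) − ψ_{r,1}(K) f(x) b + (1/2) ψ_{r,2}(K) f′(x) b² − (1/6) ψ_{r,3}(K) f″(x) b³ + O(b⁴), where ψ_{r,j}(K) = ∫ z^j r K(z)^{r−1} k(z) dz for j = 0, 1, 2, 3. -/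
open MeasureTheory

/-!
With `K t = ∫_{-∞}^t k`, the power `K ^ r` is absolutely continuous with derivative
`r K^{r-1} k` almost everywhere, so it is the primitive of that density; Fubini then turns
`E[K((x - X)/b)^r]` into `∫ F(x - b s) r K(s)^{r-1} k(s) ds`. Taylor's theorem gives
`F(x + h) = F x + f x h + f' x h²/2 + f'' x h³/6 + O(h⁴)` uniformly in `h` (Lagrange remainder
for `|h| ≤ 1`, boundedness of `F` beyond), and integrating against the density, whose fourth
moment is finite because `μ₄(k)` is, yields the expansion with the moments `ψ_{r,j}`.
-/

open Set Filter Topology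
open scoped Nat

/-- `ψ_{r,j}(K)` is the `j`-th moment of `powDensity k r`. -/
noncomputable def powDensity (k : ℝ → ℝ) (r : ℕ) (t : ℝ) : ℝ :=
  (r : ℝ) * (∫ s in Iio t, k s) ^ (r - 1) * k t

theorem AbsolutelyContinuousOnInterval.pow {f : ℝ → ℝ} {a b : ℝ}
    (hf : AbsolutelyContinuousOnInterval f a b) (n : ℕ) :
    AbsolutelyContinuousOnInterval (fun x => f x ^ n) a b := by
  induction n with
  | zero =>
    simpa using (LipschitzWith.const (1 : ℝ)).lipschitzOnWith.absolutelyContinuousOnInterval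
  | succ n ih => simpa only [pow_succ] using ih.fun_mul hf

theorem MeasureTheory.Integrable.pow_mul_of_le {k : ℝ → ℝ} (hk : Integrable k) {m j : ℕ}
    (hm : Integrable fun t => t ^ m * k t) (hjm : j ≤ m) :
    Integrable fun t => t ^ j * k t := by
  refine (hk.norm.add hm.norm).mono'
    ((continuous_pow j).aestronglyMeasurable.mul hk.aestronglyMeasurable) (ae_of_all _ fun t => ?_)
  have hpow : |t| ^ j ≤ 1 + |t| ^ m := by
    rcases le_total |t| 1 with ht | ht
    · linarith [pow_le_one₀ (n := j) (abs_nonneg t) ht, pow_nonneg (abs_nonneg t) m]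
    · linarith [pow_le_pow_right₀ ht hjm]
  simp only [norm_mul, norm_pow, Real.norm_eq_abs, Pi.add_apply]
  nlinarith [abs_nonneg (k t)]

section Primitive

variable {k : ℝ → ℝ}

theorem setIntegral_Iio_eq_add_intervalIntegral (hk : Integrable k) (a u : ℝ) :
    ∫ t in Iio u, k t = (∫ t in Iio a, k t) + ∫ t in a..u, k t := by
  rw [← intervalIntegral.integral_Iio_sub_Iio' hk.integrableOn hk.integrableOn]
  ring

theorem abs_setIntegral_Iio_le (hk : Integrable k) (u : ℝ) :
    |∫ t in Iio u, k t| ≤ ∫ t, |k t| :=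
  abs_integral_le_integral_abs.trans
    (setIntegral_le_integral hk.abs (ae_of_all _ fun _ => abs_nonneg _))

theorem continuous_setIntegral_Iio (hk : Integrable k) :
    Continuous fun u => ∫ t in Iio u, k t := by
  rw [funext (setIntegral_Iio_eq_add_intervalIntegral hk 0)]
  exact continuous_const.add
    (intervalIntegral.continuous_primitive (fun _ _ => hk.intervalIntegrable) 0)

theorem ae_hasDerivAt_setIntegral_Iio (hk : Integrable k) :
    ∀ᵐ t, HasDerivAt (fun u => ∫ s in Iio u, k s) (k t) t := by
  filter_upwards [LocallyIntegrable.ae_hasDerivAt_integral hk.locallyIntegrable] with t ht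
  rw [funext (setIntegral_Iio_eq_add_intervalIntegral hk 0)]
  exact (ht 0).const_add _

theorem hasDerivAt_setIntegral_Iio (hk : Integrable k) (hkc : Continuous k) (t : ℝ) :
    HasDerivAt (fun u => ∫ s in Iio u, k s) (k t) t := by
  rw [funext (setIntegral_Iio_eq_add_intervalIntegral hk 0)]
  exact (hkc.integral_hasStrictDerivAt 0 t).hasDerivAt.const_add _

theorem absolutelyContinuousOnInterval_setIntegral_Iio (hk : Integrable k) (a b : ℝ) :
    AbsolutelyContinuousOnInterval (fun u => ∫ t in Iio u, k t) a b := by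
  rw [funext (setIntegral_Iio_eq_add_intervalIntegral hk a)]
  exact (LipschitzWith.const _).lipschitzOnWith.absolutelyContinuousOnInterval.fun_add
    (hk.intervalIntegrable.absolutelyContinuousOnInterval_intervalIntegral left_mem_uIcc)

theorem deriv_setIntegral_Iio (hk : Integrable k) (hkc : Continuous k) :
    deriv (fun u => ∫ t in Iio u, k t) = k :=
  funext fun t => (hasDerivAt_setIntegral_Iio hk hkc t).deriv

theorem contDiff_setIntegral_Iio (hk : Integrable k) {n : ℕ} (hkn : ContDiff ℝ n k) :
    ContDiff ℝ (n + 1) fun u => ∫ t in Iio u, k t := by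
  rw [contDiff_succ_iff_deriv, deriv_setIntegral_Iio hk hkn.continuous]
  exact ⟨fun t => (hasDerivAt_setIntegral_Iio hk hkn.continuous t).differentiableAt, by simp, hkn⟩

theorem integrable_pow_mul_powDensity (hk : Integrable k) {j : ℕ}
    (hkj : Integrable fun t => t ^ j * k t) (r : ℕ) :
    Integrable fun t => t ^ j * powDensity k r t := by
  refine (hkj.bdd_mul (f := fun t => (r : ℝ) * (∫ s in Iio t, k s) ^ (r - 1))
    (c := r * (∫ t, |k t|) ^ (r - 1))
    (continuous_const.mul ((continuous_setIntegral_Iio hk).pow _)).aestronglyMeasurable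
    (ae_of_all _ fun t => ?_)).congr (ae_of_all _ fun t => ?_)
  · rw [Real.norm_eq_abs, abs_mul, abs_pow, Nat.abs_cast]
    gcongr
    exact abs_setIntegral_Iio_le hk t
  · simp only [powDensity]
    ring

theorem integrable_powDensity (hk : Integrable k) (r : ℕ) : Integrable (powDensity k r) := by
  simpa using integrable_pow_mul_powDensity hk (j := 0) (by simpa using hk) r

theorem setIntegral_Iio_pow (hk : Integrable k) {r : ℕ} (hr : r ≠ 0) (u : ℝ) :
    (∫ t in Iio u, k t) ^ r = ∫ t in Iio u, powDensity k r t := by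
  have hFTC : ∀ a, (∫ t in Iio u, k t) ^ r - (∫ t in Iio a, k t) ^ r
      = ∫ t in a..u, powDensity k r t := by
    intro a
    rw [← ((absolutelyContinuousOnInterval_setIntegral_Iio hk a u).pow r).integral_deriv_eq_sub]
    refine intervalIntegral.integral_congr_ae ?_
    filter_upwards [ae_hasDerivAt_setIntegral_Iio hk] with t ht _
    exact (ht.pow r).deriv
  have hleft : Tendsto (fun a => (∫ t in Iio u, k t) ^ r - (∫ t in Iio a, k t) ^ r) atBot
      (𝓝 ((∫ t in Iio u, k t) ^ r)) := by
    simpa [hr] using tendsto_const_nhds.sub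
      ((tendsto_integral_Iio_zero (f := k) (μ := volume) tendsto_id).pow r)
  have hright : Tendsto (fun a => ∫ t in a..u, powDensity k r t) atBot
      (𝓝 (∫ t in Iio u, powDensity k r t)) := by
    rw [← integral_Iic_eq_integral_Iio]
    exact intervalIntegral_tendsto_integral_Iic u (integrable_powDensity hk r).integrableOn
      tendsto_id
  exact tendsto_nhds_unique (hleft.congr hFTC) hright

theorem integral_powDensity (hk : Integrable k) {r : ℕ} (hr : r ≠ 0) :
    ∫ t, powDensity k r t = (∫ t, k t) ^ r := by
  have hlim : Tendsto (fun u => (∫ t in Iio u, k t) ^ r) atTop (𝓝 ((∫ t, k t) ^ r)) :=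
    ((aecover_Iio (μ := volume) tendsto_id).integral_tendsto_of_countably_generated hk).pow r
  simp_rw [setIntegral_Iio_pow hk hr] at hlim
  exact tendsto_nhds_unique
    ((aecover_Iio (μ := volume) tendsto_id).integral_tendsto_of_countably_generated
      (integrable_powDensity hk r))
    hlim

end Primitive

theorem integral_setIntegral_Iio_div_mul {f g : ℝ → ℝ} (hf : Integrable f) (hg : Integrable g)
    {b : ℝ} (hb : 0 < b) (x : ℝ) :
    ∫ y, (∫ s in Iio ((x - y) / b), g s) * f y = ∫ s, g s * ∫ t in Iio (x - b * s), f t := by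
  set S : Set (ℝ × ℝ) := {p | p.1 + b * p.2 < x}
  have hS : MeasurableSet S := measurableSet_lt (by fun_prop) measurable_const
  have hint : Integrable (S.indicator fun p => f p.1 * g p.2) (volume.prod volume) :=
    (hf.mul_prod hg).indicator hS
  have hleft : ∀ y, ∫ s, S.indicator (fun p => f p.1 * g p.2) (y, s)
      = (∫ s in Iio ((x - y) / b), g s) * f y := by
    intro y
    have hmem : ∀ s, (y, s) ∈ S ↔ s ∈ Iio ((x - y) / b) := fun s => by
      rw [Set.mem_Iio, lt_div_iff₀ hb]
      exact ⟨fun h => by simp only [S, mem_ofPred_eq] at h; linarith,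
        fun h => by simp only [S, mem_ofPred_eq]; linarith⟩
    rw [← integral_indicator measurableSet_Iio, ← integral_mul_const]
    congr 1 with s
    simp only [indicator_apply, hmem]
    split_ifs <;> ring
  have hright : ∀ s, ∫ y, S.indicator (fun p => f p.1 * g p.2) (y, s)
      = g s * ∫ t in Iio (x - b * s), f t := by
    intro s
    have hmem : ∀ y, (y, s) ∈ S ↔ y ∈ Iio (x - b * s) := fun y => by
      rw [Set.mem_Iio]
      exact ⟨fun h => by simp only [S, mem_ofPred_eq] at h; linarith,
        fun h => by simp only [S, mem_ofPred_eq]; linarith⟩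
    rw [← integral_indicator measurableSet_Iio, ← integral_const_mul]
    congr 1 with y
    simp only [indicator_apply, hmem]
    split_ifs <;> ring
  simp_rw [← hleft, ← hright]
  exact integral_integral_swap hint

section Taylor

variable {F : ℝ → ℝ} {n : ℕ}

theorem taylorWithinEval_uIcc_eq_sum (hF : ContDiff ℝ n F) {x y : ℝ} (hxy : x ≠ y) :
    taylorWithinEval F n (uIcc x y) x y
      = ∑ i ∈ Finset.range (n + 1), iteratedDeriv i F x / i ! * (y - x) ^ i := by
  rw [taylor_within_apply]
  refine Finset.sum_congr rfl fun i hi => ?_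
  have hin : (i : WithTop ℕ∞) ≤ n := by
    exact_mod_cast Nat.lt_succ_iff.mp (Finset.mem_range.mp hi)
  rw [iteratedDerivWithin_eq_iteratedDeriv (uniqueDiffOn_uIcc hxy) (hF.of_le hin).contDiffAt
    left_mem_uIcc, smul_eq_mul]
  ring

theorem exists_abs_sub_taylor_le_of_abs_le_one (hF : ContDiff ℝ (n + 1) F) (x : ℝ) :
    ∃ C, ∀ y, |y - x| ≤ 1 →
      |F y - ∑ i ∈ Finset.range (n + 1), iteratedDeriv i F x / i ! * (y - x) ^ i|
        ≤ C * |y - x| ^ (n + 1) := by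
  obtain ⟨B, hB⟩ := isCompact_Icc.exists_bound_of_continuousOn (s := Icc (x - 1) (x + 1))
    (hF.continuous_iteratedDeriv (n + 1) le_rfl).continuousOn
  refine ⟨B, fun y hy => ?_⟩
  rcases eq_or_ne x y with rfl | hxy
  · simp [Finset.sum_range_succ']
  obtain ⟨x', hx', hrem⟩ := taylor_mean_remainder_lagrange_iteratedDeriv hxy hF.contDiffOn
  rw [← taylorWithinEval_uIcc_eq_sum hF.of_succ hxy, hrem, abs_div, abs_mul, abs_pow,
    Nat.abs_cast]
  have hx'I : x' ∈ Icc (x - 1) (x + 1) := by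
    obtain ⟨h1, h2⟩ := abs_le.mp hy
    exact Ioo_subset_Icc_self
      (uIoo_subset_Ioo ⟨by linarith, by linarith⟩ ⟨by linarith, by linarith⟩ hx')
  calc |iteratedDeriv (n + 1) F x'| * |y - x| ^ (n + 1) / ((n + 1)! : ℝ)
      ≤ |iteratedDeriv (n + 1) F x'| * |y - x| ^ (n + 1) :=
        div_le_self (by positivity) (by exact_mod_cast (n + 1).factorial_pos)
    _ ≤ B * |y - x| ^ (n + 1) := by gcongr; exact hB x' hx'I

theorem abs_sum_mul_pow_le (c : ℕ → ℝ) (N : ℕ) {h : ℝ} (hh : 1 ≤ |h|) :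
    |∑ i ∈ Finset.range N, c i * h ^ i| ≤ (∑ i ∈ Finset.range N, |c i|) * |h| ^ N := by
  rw [Finset.sum_mul]
  refine (Finset.abs_sum_le_sum_abs _ _).trans (Finset.sum_le_sum fun i hi => ?_)
  rw [abs_mul, abs_pow]
  gcongr
  exact (Finset.mem_range.mp hi).le

theorem exists_abs_sub_taylor_le (hF : ContDiff ℝ (n + 1) F) {M : ℝ} (hM : ∀ y, |F y| ≤ M)
    (x : ℝ) :
    ∃ C, ∀ y, |F y - ∑ i ∈ Finset.range (n + 1), iteratedDeriv i F x / i ! * (y - x) ^ i|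
      ≤ C * |y - x| ^ (n + 1) := by
  obtain ⟨C, hC⟩ := exists_abs_sub_taylor_le_of_abs_le_one hF x
  set c : ℕ → ℝ := fun i => iteratedDeriv i F x / (i ! : ℝ)
  refine ⟨max C (M + ∑ i ∈ Finset.range (n + 1), |c i|), fun y => ?_⟩
  rcases le_total |y - x| 1 with hy | hy
  · exact (hC y hy).trans (by gcongr; exact le_max_left _ _)
  have hM0 : 0 ≤ M := (abs_nonneg _).trans (hM x)
  calc |F y - ∑ i ∈ Finset.range (n + 1), c i * (y - x) ^ i|
      ≤ |F y| + |∑ i ∈ Finset.range (n + 1), c i * (y - x) ^ i| := abs_sub _ _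
    _ ≤ M * |y - x| ^ (n + 1) + (∑ i ∈ Finset.range (n + 1), |c i|) * |y - x| ^ (n + 1) :=
        add_le_add ((hM y).trans (le_mul_of_one_le_right hM0 (one_le_pow₀ hy)))
          (abs_sum_mul_pow_le c _ hy)
    _ ≤ max C (M + ∑ i ∈ Finset.range (n + 1), |c i|) * |y - x| ^ (n + 1) := by
        rw [← add_mul]; gcongr; exact le_max_right _ _

theorem exists_abs_integral_mul_sub_sum_le (hF : ContDiff ℝ (n + 1) F) {M : ℝ}
    (hM : ∀ y, |F y| ≤ M) {G : ℝ → ℝ} (hG : ∀ j ≤ n + 1, Integrable fun s => s ^ j * G s)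
    (x : ℝ) :
    ∃ C, ∀ b, |(∫ s, G s * F (x - b * s))
        - ∑ i ∈ Finset.range (n + 1), iteratedDeriv i F x / i ! * (-b) ^ i * ∫ s, s ^ i * G s|
      ≤ C * |b| ^ (n + 1) := by
  obtain ⟨C, hC⟩ := exists_abs_sub_taylor_le hF hM x
  refine ⟨C * ∫ s, |s ^ (n + 1) * G s|, fun b => ?_⟩
  set T : ℝ → ℝ := fun s =>
    ∑ i ∈ Finset.range (n + 1), iteratedDeriv i F x / i ! * (x - b * s - x) ^ i
  have hterm : ∀ i ∈ Finset.range (n + 1), Integrable fun s =>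
      iteratedDeriv i F x / i ! * (-b) ^ i * (s ^ i * G s) := fun i hi =>
    (hG i (Finset.mem_range.mp hi).le).const_mul _
  have hGT : ∫ s, G s * T s
      = ∑ i ∈ Finset.range (n + 1), iteratedDeriv i F x / i ! * (-b) ^ i * ∫ s, s ^ i * G s := by
    simp_rw [← integral_const_mul]
    rw [← integral_finsetSum _ hterm]
    congr 1 with s
    simp only [T, Finset.mul_sum]
    refine Finset.sum_congr rfl fun i _ => ?_
    ring
  have hGint : Integrable G := by simpa using hG 0 (Nat.zero_le _)
  have hGF : Integrable fun s => G s * F (x - b * s) :=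
    hGint.mul_bdd (hF.continuous.comp (by fun_prop)).aestronglyMeasurable
      (ae_of_all _ fun s => hM _)
  have hGTint : Integrable fun s => G s * T s :=
    (integrable_finsetSum _ hterm).congr (ae_of_all _ fun s => by
      simp only [T, Finset.mul_sum]
      refine Finset.sum_congr rfl fun i _ => ?_
      ring)
  rw [← hGT, ← integral_sub hGF hGTint]
  calc |∫ s, (G s * F (x - b * s) - G s * T s)|
      ≤ ∫ s, |G s * F (x - b * s) - G s * T s| := abs_integral_le_integral_abs
    _ ≤ ∫ s, C * |b| ^ (n + 1) * |s ^ (n + 1) * G s| := by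
        refine integral_mono_of_nonneg (ae_of_all _ fun _ => abs_nonneg _)
          ((hG _ le_rfl).abs.const_mul _) (ae_of_all _ fun s => ?_)
        calc |G s * F (x - b * s) - G s * T s| = |G s| * |F (x - b * s) - T s| := by
              rw [← mul_sub, abs_mul]
          _ ≤ |G s| * (C * |x - b * s - x| ^ (n + 1)) := by gcongr; exact hC _
          _ = C * |b| ^ (n + 1) * |s ^ (n + 1) * G s| := by
              rw [show x - b * s - x = -(b * s) by ring, abs_neg, abs_mul, abs_mul, abs_pow,
                mul_pow]
              ring
    _ = C * (∫ s, |s ^ (n + 1) * G s|) * |b| ^ (n + 1) := by rw [integral_const_mul]; ring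

end Taylor

theorem stmt5_general (f : ℝ → ℝ)
    (hfInt : Integrable f)
    (hfC4 : ContDiff ℝ 4 f)
    (k : ℝ → ℝ) (hk1 : ∫ x, k x = 1)
    (hk4 : Integrable fun x => x ^ 4 * k x)
    (r : ℕ) (hr : 1 ≤ r) (x : ℝ) :
    ∃ C > 0, ∃ δ > 0, ∀ b : ℝ, 0 < b → b ≤ δ →
      |(∫ y : ℝ, (∫ t in Set.Iio ((x - y) / b), k t) ^ r * f y)
          - ((∫ t in Set.Iio x, f t)
            - (∫ z : ℝ, z ^ 1 * ((r : ℝ) * (∫ t in Set.Iio z, k t) ^ (r - 1) * k z)) * f x * b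
            + (1 / 2) *
              (∫ z : ℝ, z ^ 2 * ((r : ℝ) * (∫ t in Set.Iio z, k t) ^ (r - 1) * k z)) *
                deriv f x * b ^ 2
            - (1 / 6) *
              (∫ z : ℝ, z ^ 3 * ((r : ℝ) * (∫ t in Set.Iio z, k t) ^ (r - 1) * k z)) *
                iteratedDeriv 2 f x * b ^ 3)|
        ≤ C * b ^ 4 := by
  have hk : Integrable k := Integrable.of_integral_ne_zero (by simp [hk1])
  have hr0 : r ≠ 0 := Nat.one_le_iff_ne_zero.mp hr
  set F : ℝ → ℝ := fun w => ∫ t in Iio w, f t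
  have hderiv : ∀ i, iteratedDeriv (i + 1) F = iteratedDeriv i f := fun i => by
    rw [iteratedDeriv_succ', deriv_setIntegral_Iio hfInt hfC4.continuous]
  obtain ⟨C, hC⟩ := exists_abs_integral_mul_sub_sum_le (n := 3)
    (contDiff_setIntegral_Iio hfInt (hfC4.of_le (by norm_num))) (abs_setIntegral_Iio_le hfInt)
    (fun j hj => integrable_pow_mul_powDensity hk (hk.pow_mul_of_le hk4 hj) r) x
  refine ⟨max C 1, by positivity, 1, one_pos, fun b hb _ => ?_⟩
  have hfubini : ∫ y, (∫ t in Iio ((x - y) / b), k t) ^ r * f y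
      = ∫ s, powDensity k r s * F (x - b * s) := by
    simp_rw [setIntegral_Iio_pow hk hr0]
    exact integral_setIntegral_Iio_div_mul hfInt (integrable_powDensity hk r) hb x
  calc _ = |(∫ s, powDensity k r s * F (x - b * s))
        - ∑ i ∈ Finset.range 4,
            iteratedDeriv i F x / i ! * (-b) ^ i * ∫ s, s ^ i * powDensity k r s| := by
        rw [hfubini]
        congr 2
        simp only [Finset.sum_range_succ, Finset.sum_range_zero, hderiv, iteratedDeriv_zero,
          iteratedDeriv_one, pow_zero, one_mul]
        rw [integral_powDensity hk hr0, hk1, one_pow]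
        simp only [powDensity]
        norm_num
        ring
    _ ≤ C * |b| ^ 4 := hC b
    _ ≤ max C 1 * b ^ 4 := by rw [abs_of_pos hb]; gcongr; exact le_max_left _ _

/-- let `X` have density `f` with a bounded continuous fourth
derivative, and let `k` be a kernel with `μ₄(k) < ∞`, `K(x) = ∫_{-∞}^x k`. Then for
each integer `r ≥ 1` and fixed `x`, as `b → 0⁺`,
`E[K_b(x - X)^r] = F(x) - ψ_{r,1}(K) f(x) b + (1/2) ψ_{r,2}(K) f'(x) b²
  - (1/6) ψ_{r,3}(K) f''(x) b³ + O(b⁴)`,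
where `ψ_{r,j}(K) = ∫ z^j r K(z)^{r-1} k(z) dz`. -/
theorem stmt5 (f : ℝ → ℝ) (hfm : Measurable f) (hf0 : ∀ x, 0 ≤ f x)
    (hfInt : Integrable f) (hf1 : ∫ x, f x = 1)
    (hfC4 : ContDiff ℝ 4 f) (hf4bd : ∃ M, ∀ x, |iteratedDeriv 4 f x| ≤ M)
    (k : ℝ → ℝ) (hkm : Measurable k) (hk0 : ∀ x, 0 ≤ k x)
    (hkbd : ∃ M, ∀ x, k x ≤ M) (hksym : ∀ x, k (-x) = k x) (hk1 : ∫ x, k x = 1)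
    (hk4 : Integrable fun x => x ^ 4 * k x)
    (r : ℕ) (hr : 1 ≤ r) (x : ℝ) :
    ∃ C > 0, ∃ δ > 0, ∀ b : ℝ, 0 < b → b ≤ δ →
      |(∫ y : ℝ, (∫ t in Set.Iio ((x - y) / b), k t) ^ r * f y)
          - ((∫ t in Set.Iio x, f t)
            - (∫ z : ℝ, z ^ 1 * ((r : ℝ) * (∫ t in Set.Iio z, k t) ^ (r - 1) * k z)) * f x * b
            + (1 / 2) *
              (∫ z : ℝ, z ^ 2 * ((r : ℝ) * (∫ t in Set.Iio z, k t) ^ (r - 1) * k z)) *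
                deriv f x * b ^ 2
            - (1 / 6) *
              (∫ z : ℝ, z ^ 3 * ((r : ℝ) * (∫ t in Set.Iio z, k t) ^ (r - 1) * k z)) *
                iteratedDeriv 2 f x * b ^ 3)|
        ≤ C * b ^ 4 :=
  stmt5_general f hfInt hfC4 k hk1 hk4 r hr x
end

section
/- For every n ≥ 2, the (n−1)-dimensional volume of the scaled regular permutohedron satisfies Vol_{n−1}(Π_n) = n^{n−2}/(n−1)^{n−1}; equivalently, the Lebesgue measure in ℝ^{n−1} of the projection of Π_n obtained by deleting the last coordinate equals n^{n−2}/(n−1)^{n−1}. -/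
/-!
Deleting the last coordinate and rescaling, the projected `Π_n` (with `n = m + 1`) is the image
under `y ↦ 1/2 - y / m` of the permutohedron `P` whose vertices are the permutations of
`(0, 1, …, m)` centred at the origin. Read inside the hyperplane `∑ = 0` of Euclidean `ℝ^(m+1)`,
`P` is the Voronoi cell of the lattice of integer vectors whose coordinates are all congruent
modulo `m + 1`. The vertices lie in the cell by an integer inequality; conversely, a point of the
cell outside `P` would be separated from `P` by a linear functional, and the vertex obtained by
sorting that functional does at least as well as the point (Abel summation against the
majorization inequalities cut out by the cell). A Voronoi cell is a fundamental domain, so the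
volume of `P` is the covolume `(m + 1) ^ (m - 1)` of the lattice, and scaling by `1 / m` gives
`n ^ (n - 2) / (n - 1) ^ (n - 1)`.
-/

open MeasureTheory

open Finset

/-! ### An integer inequality -/

theorem natCast_mul_abs_le_sq_of_dvd {N : ℕ} {d : ℤ} (hd : (N : ℤ) ∣ d) : N * |d| ≤ d ^ 2 := by
  rcases eq_or_ne d 0 with rfl | hd0
  · simp
  calc (N : ℤ) * |d| ≤ |d| * |d| :=
        mul_le_mul_of_nonneg_right (Int.le_of_dvd (abs_pos.mpr hd0) ((dvd_abs _ _).mpr hd))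
          (abs_nonneg d)
    _ = d ^ 2 := by rw [← sq, sq_abs]

theorem Fin.sum_ite_lt_sub_ite_gt {N : ℕ} (j : Fin N) :
    ∑ k : Fin N, ((if k < j then 1 else 0) - (if j < k then 1 else 0) : ℤ) = 2 * j + 1 - N := by
  rw [sum_sub_distrib, sum_boole, sum_boole, filter_gt_eq_Iio, filter_lt_eq_Ioi, Fin.card_Iio,
    Fin.card_Ioi]
  omega

theorem Fin.sum_sum_sub_sq {N : ℕ} (c : Fin N → ℤ) :
    ∑ j, ∑ k, (c j - c k) ^ 2 = 2 * N * ∑ k, c k ^ 2 - 2 * (∑ k, c k) ^ 2 := by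
  simp only [sub_sq, sum_add_distrib, sum_sub_distrib, sum_const,
    nsmul_eq_mul, ← mul_sum, ← sum_mul, mul_assoc]
  ring

theorem two_mul_sum_mul_le_sum_sq {N : ℕ} (c : Fin N → ℤ) (hsum : ∑ k, c k = 0)
    (hdvd : ∀ j k, (N : ℤ) ∣ c j - c k) :
    2 * ∑ k : Fin N, ((k : ℕ) : ℤ) * c k ≤ ∑ k, c k ^ 2 := by
  -- Sum `N * sign (j - k) * (c j - c k) ≤ (c j - c k) ^ 2` over all pairs `(j, k)`.
  set sgn : Fin N → Fin N → ℤ := fun j k => (if k < j then 1 else 0) - (if j < k then 1 else 0)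
  have hsgn : ∀ j k, sgn j k * (c j - c k) ≤ |c j - c k| := by
    intro j k
    rcases lt_trichotomy j k with h | rfl | h
    · simp only [sgn, h, h.not_gt, if_true, if_false]
      linarith [neg_abs_le (c j - c k)]
    · simp [sgn]
    · simp [sgn, h, h.not_gt, le_abs_self]
  have hanti : ∑ j, ∑ k, sgn j k * c k = - ∑ j, ∑ k, sgn j k * c j := by
    rw [sum_comm, ← sum_neg_distrib]
    refine sum_congr rfl fun j _ => ?_
    rw [← sum_neg_distrib]
    refine sum_congr rfl fun k _ => ?_
    simp only [sgn]; ring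
  have hlin : ∑ j, ∑ k, sgn j k * (c j - c k) = 4 * ∑ k : Fin N, (k : ℤ) * c k := by
    calc ∑ j, ∑ k, sgn j k * (c j - c k)
        = ∑ j, ∑ k, sgn j k * c j - ∑ j, ∑ k, sgn j k * c k := by
          simp only [mul_sub, sum_sub_distrib]
      _ = 2 * ∑ j : Fin N, (2 * (j : ℤ) + 1 - N) * c j := by
          simp only [hanti, sub_neg_eq_add, ← two_mul, ← sum_mul, sgn, Fin.sum_ite_lt_sub_ite_gt]
      _ = 4 * ∑ k : Fin N, (k : ℤ) * c k := by
          simp only [add_mul, sub_mul, sum_add_distrib, sum_sub_distrib, mul_assoc, ← mul_sum,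
            hsum]
          ring
  have hle : 2 * N * (2 * ∑ k : Fin N, (k : ℤ) * c k) ≤ 2 * N * ∑ k, c k ^ 2 :=
    calc 2 * N * (2 * ∑ k : Fin N, (k : ℤ) * c k)
        = ∑ j, ∑ k, N * (sgn j k * (c j - c k)) := by
          simp only [← mul_sum, hlin]; ring
      _ ≤ ∑ j, ∑ k, (c j - c k) ^ 2 := by
          gcongr with j _ k _
          exact (mul_le_mul_of_nonneg_left (hsgn j k) (by positivity)).trans
            (natCast_mul_abs_le_sq_of_dvd (hdvd j k))
      _ = 2 * N * ∑ k, c k ^ 2 := by rw [Fin.sum_sum_sub_sq, hsum]; ring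
  rcases Nat.eq_zero_or_pos N with rfl | hN
  · simp
  exact le_of_mul_le_mul_left hle (by positivity)

/-! ### Majorization -/

theorem sum_mul_le_sum_mul_of_sum_range_le {N : ℕ} {ψ a b : ℕ → ℝ}
    (hψ : ∀ k, k + 1 < N → ψ k ≤ ψ (k + 1))
    (hpre : ∀ t ≤ N, ∑ k ∈ range t, b k ≤ ∑ k ∈ range t, a k)
    (htot : ∑ k ∈ range N, a k = ∑ k ∈ range N, b k) :
    ∑ k ∈ range N, ψ k * a k ≤ ∑ k ∈ range N, ψ k * b k := by
  have hD : ∀ t ≤ N, 0 ≤ ∑ k ∈ range t, (a k - b k) := fun t ht => by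
    rw [sum_sub_distrib]; linarith [hpre t ht]
  have hparts := sum_range_by_parts ψ (fun k => a k - b k) N
  rw [sum_sub_distrib (f := a), htot, sub_self, smul_zero, zero_sub] at hparts
  have hnonneg : 0 ≤ ∑ i ∈ range (N - 1),
      (ψ (i + 1) - ψ i) • ∑ k ∈ range (i + 1), (a k - b k) :=
    sum_nonneg fun i hi => by
      have hi : i + 1 < N := by rw [mem_range] at hi; omega
      exact mul_nonneg (sub_nonneg.mpr (hψ i hi)) (hD _ hi.le)
  have hle : ∑ k ∈ range N, ψ k * (a k - b k) ≤ 0 := by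
    simp only [← smul_eq_mul (a := ψ _)]
    rw [hparts]
    exact neg_nonpos.mpr hnonneg
  simpa only [mul_sub, sum_sub_distrib, sub_nonpos] using hle

theorem sum_range_natCast_sub_half {N t : ℕ} :
    ∑ k ∈ range t, ((k : ℝ) - (N - 1) / 2) = t * (t - N) / 2 := by
  induction t with
  | zero => simp
  | succ t ih => rw [sum_range_succ, ih]; push_cast; ring

theorem exists_perm_sum_mul_le {N : ℕ} (φ z : Fin N → ℝ) (hz : ∑ j, z j = 0)
    (hS : ∀ S : Finset (Fin N), ∑ j ∈ S, z j ≤ #S * (N - #S) / 2) :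
    ∃ σ : Equiv.Perm (Fin N), ∑ j, φ j * z j ≤ ∑ j, φ j * (((σ j : ℕ) : ℝ) - (N - 1) / 2) := by
  -- Sort `φ` increasingly by `ρ`; the partial sums of `z ∘ ρ` then dominate those of `k - (N-1)/2`.
  set ρ := Tuple.sort φ
  let pad : (Fin N → ℝ) → ℕ → ℝ := fun f k => if h : k < N then f ⟨k, h⟩ else 0
  have pad_val : ∀ f (j : Fin N), pad f j = f j := fun f j => by simp [pad, j.isLt]
  have sum_range_pad : ∀ f, ∀ t ≤ N,
      ∑ k ∈ range t, pad f k = ∑ j ∈ univ.filter (fun j : Fin N => (j : ℕ) < t), f j := by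
    intro f t ht
    have hrange : range t = (range N).filter (· < t) := by
      ext k; simp only [mem_range, mem_filter]; omega
    rw [sum_filter, hrange, sum_filter, ← Fin.sum_univ_eq_sum_range]
    simp only [pad_val]
  have hmono : ∀ k, k + 1 < N → pad (φ ∘ ρ) k ≤ pad (φ ∘ ρ) (k + 1) := fun k hk => by
    simp only [pad, dif_pos hk, dif_pos (k.lt_succ_self.trans hk)]
    exact Tuple.monotone_sort φ (Fin.mk_le_mk.mpr k.le_succ)
  have hpre : ∀ t ≤ N,
      ∑ k ∈ range t, ((k : ℝ) - (N - 1) / 2) ≤ ∑ k ∈ range t, pad (z ∘ ρ) k := by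
    intro t ht
    set S := (univ.filter (fun j : Fin N => (j : ℕ) < t)).map ρ.toEmbedding
    have hcard : #S = t := by rw [card_map, Fin.card_filter_val_lt, min_eq_right ht]
    have hcompl := hS Sᶜ
    rw [card_compl, hcard, Fintype.card_fin, Nat.cast_sub ht] at hcompl
    have hsplit := sum_add_sum_compl S z
    rw [hz, sum_map, Equiv.coe_toEmbedding] at hsplit
    rw [sum_range_natCast_sub_half, sum_range_pad _ t ht]
    simp only [Function.comp_apply]
    linarith
  have htot : ∑ k ∈ range N, pad (z ∘ ρ) k = ∑ k ∈ range N, ((k : ℝ) - (N - 1) / 2) := by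
    rw [sum_range_natCast_sub_half, sub_self, mul_zero, zero_div, sum_range_pad _ N le_rfl]
    simpa [Equiv.sum_comp ρ z] using hz
  refine ⟨ρ.symm, ?_⟩
  convert sum_mul_le_sum_mul_of_sum_range_le hmono hpre htot using 1
  · rw [← Fin.sum_univ_eq_sum_range (fun k => pad (φ ∘ ρ) k * pad (z ∘ ρ) k), ← Equiv.sum_comp ρ]
    simp [pad_val]
  · rw [← Fin.sum_univ_eq_sum_range (fun k => pad (φ ∘ ρ) k * ((k : ℝ) - (N - 1) / 2)),
      ← Equiv.sum_comp ρ]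
    simp [pad_val]

/-! ### Voronoi cells -/

section Voronoi

variable {V F : Type*} [NormedAddCommGroup V] [NormedSpace ℝ V]
  [NormedAddCommGroup F] [InnerProductSpace ℝ F] (E : V →ₗ[ℝ] F) (L : Submodule ℤ V)

def voronoiCell : Set V := {y | ∀ l ∈ L, ‖E y‖ ≤ ‖E (y - l)‖}

variable {E L}

theorem mem_voronoiCell_iff {y : V} :
    y ∈ voronoiCell E L ↔ ∀ l ∈ L, 2 * inner ℝ (E y) (E l) ≤ ‖E l‖ ^ 2 := by
  refine forall₂_congr fun l _ => ?_
  rw [map_sub, ← sq_le_sq₀ (norm_nonneg _) (norm_nonneg _), norm_sub_sq_real]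
  constructor <;> intro h <;> linarith

variable (E L)

theorem convex_voronoiCell : Convex ℝ (voronoiCell E L) := by
  intro y hy z hz a b ha hb hab
  rw [mem_voronoiCell_iff] at hy hz ⊢
  intro l hl
  rw [map_add, map_smul, map_smul, inner_add_left, real_inner_smul_left, real_inner_smul_left]
  nlinarith [hy l hl, hz l hl]

variable [FiniteDimensional ℝ V]

theorem isClosed_voronoiCell : IsClosed (voronoiCell E L) := by
  have hE : Continuous E := E.continuous_of_finiteDimensional
  simp only [voronoiCell, Set.ofPred_forall]
  exact isClosed_biInter fun l _ => isClosed_le (by fun_prop) (by fun_prop)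

variable {E L}

theorem exists_add_mem_voronoiCell [ProperSpace F] (hE : Function.Injective E)
    (hL : IsClosed (L : Set V)) (x : V) : ∃ g ∈ L, g + x ∈ voronoiCell E L := by
  have hcont : Continuous fun g => ‖E (g + x)‖ := by
    have := E.continuous_of_finiteDimensional; fun_prop
  set K := {g | ‖E (g + x)‖ ≤ ‖E x‖}
  have hK : IsCompact K := by
    have hemb := E.isClosedEmbedding_of_injective (LinearMap.ker_eq_bot.mpr hE)
    convert hemb.isCompact_preimage (isCompact_closedBall (-E x) ‖E x‖) using 1
    ext g
    simp [K, dist_eq_norm]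
  obtain ⟨g, ⟨hgL, -⟩, hgmin⟩ := (hK.inter_left hL).exists_isMinOn
    ⟨0, L.zero_mem, by simp [K]⟩ hcont.continuousOn
  have hg0 : ‖E (g + x)‖ ≤ ‖E x‖ := by simpa using hgmin ⟨L.zero_mem, by simp [K]⟩
  refine ⟨g, hgL, fun l hl => ?_⟩
  rw [show g + x - l = (g - l) + x by abel]
  by_cases hK' : g - l ∈ K
  · exact hgmin ⟨L.sub_mem hgL hl, hK'⟩
  · exact hg0.trans (le_of_not_ge hK')

theorem addHaar_setOf_apply_eq [MeasurableSpace V] [BorelSpace V] (μ : Measure V)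
    [μ.IsAddHaarMeasure] {f : V →ₗ[ℝ] ℝ} (hf : f ≠ 0) (c : ℝ) : μ {y | f y = c} = 0 := by
  rcases Set.eq_empty_or_nonempty {y | f y = c} with h | ⟨y₀, rfl : f y₀ = c⟩
  · rw [h, measure_empty]
  have : {y | f y = f y₀} = (· + -y₀) ⁻¹' (LinearMap.ker f : Set V) := by
    ext y
    simp_all [sub_eq_zero, ← sub_eq_add_neg]
  rw [this, measure_preimage_add_right]
  exact Measure.addHaar_submodule μ _ (by rwa [Ne, LinearMap.ker_eq_top])

theorem isAddFundamentalDomain_voronoiCell [ProperSpace F] [MeasurableSpace V] [BorelSpace V]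
    (μ : Measure V) [μ.IsAddHaarMeasure] (hE : Function.Injective E) (hL : IsClosed (L : Set V)) :
    IsAddFundamentalDomain L (voronoiCell E L) μ where
  nullMeasurableSet := (isClosed_voronoiCell E L).measurableSet.nullMeasurableSet
  ae_covers := .of_forall fun x => by
    obtain ⟨g, hg, hgx⟩ := exists_add_mem_voronoiCell hE hL x
    exact ⟨⟨g, hg⟩, hgx⟩
  aedisjoint g g' hne := by
    -- Two translates of the cell meet only on the bisecting hyperplane of `g` and `g'`.
    have hd : E ((g' : V) - g) ≠ 0 := fun h =>
      hne (Subtype.ext (sub_eq_zero.mp (hE (h.trans E.map_zero.symm))).symm)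
    let f : V →ₗ[ℝ] ℝ := innerₗ F (E ((g' : V) - g)) ∘ₗ E
    have hf : f ≠ 0 := fun h => by
      have := LinearMap.congr_fun h ((g' : V) - g)
      simp only [f, LinearMap.comp_apply, innerₗ_apply_apply, LinearMap.zero_apply,
        inner_self_eq_zero] at this
      exact hd this
    refine measure_mono_null (fun y ⟨hy, hy'⟩ => ?_)
      (addHaar_setOf_apply_eq μ hf ((‖E g'‖ ^ 2 - ‖E g‖ ^ 2) / 2))
    simp only [Set.mem_vadd_set_iff_neg_vadd_mem, Submodule.vadd_def, vadd_eq_add,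
      Submodule.coe_neg, neg_add_eq_sub] at hy hy'
    have h₁ := hy _ (L.sub_mem g'.2 g.2)
    have h₂ := hy' _ (L.sub_mem g.2 g'.2)
    rw [sub_sub_sub_cancel_right] at h₁ h₂
    have heq := congrArg (· ^ 2) (le_antisymm h₁ h₂)
    simp only [map_sub, norm_sub_sq_real] at heq
    change inner ℝ (E ((g' : V) - g)) (E y) = _
    rw [map_sub, inner_sub_left]
    linarith [real_inner_comm (E y) (E g), real_inner_comm (E y) (E g')]

theorem covolume_eq_measureReal_voronoiCell [ProperSpace F] [MeasurableSpace V] [BorelSpace V]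
    (μ : Measure V) [μ.IsAddHaarMeasure] (hE : Function.Injective E) [DiscreteTopology L]
    [IsZLattice ℝ L] : ZLattice.covolume L μ = μ.real (voronoiCell E L) :=
  ZLattice.covolume_eq_measure_fundamentalDomain L μ
    (isAddFundamentalDomain_voronoiCell μ hE
      (AddSubgroup.isClosed_of_discrete (H := L.toAddSubgroup)))

end Voronoi

theorem covolume_span_eq_abs_det {ι : Type*} [Fintype ι] [DecidableEq ι]
    (b : Module.Basis ι ℝ (ι → ℝ)) :
    ZLattice.covolume (Submodule.span ℤ (Set.range b)) = |(Matrix.of b).det| := by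
  rw [ZLattice.covolume_eq_measure_fundamentalDomain _ _ (ZSpan.isAddFundamentalDomain b volume),
    ZSpan.volume_real_fundamentalDomain]

/-! ### The permutohedron as a Voronoi cell -/

namespace Permutohedron

variable {m : ℕ}

variable (m) in
def snocNegSum : (Fin m → ℝ) →ₗ[ℝ] Fin (m + 1) → ℝ where
  toFun y := Fin.snoc y (-∑ i, y i)
  map_add' y w := by
    ext j
    induction j using Fin.lastCases <;> simp [sum_add_distrib, add_comm]
  map_smul' c y := by
    ext j
    induction j using Fin.lastCases <;> simp [← mul_sum]

theorem init_snocNegSum (y : Fin m → ℝ) : Fin.init (snocNegSum m y) = y := Fin.init_snoc _ _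

theorem sum_snocNegSum (y : Fin m → ℝ) : ∑ j, snocNegSum m y j = 0 := by
  simp [snocNegSum, Fin.sum_univ_castSucc]

theorem snocNegSum_init {v : Fin (m + 1) → ℝ} (hv : ∑ j, v j = 0) :
    snocNegSum m (Fin.init v) = v := by
  rw [Fin.sum_univ_castSucc, add_eq_zero_iff_neg_eq] at hv
  conv_rhs => rw [← Fin.snoc_init_self v, ← hv]
  rfl

variable (m) in
/-- The Euclidean structure of the hyperplane `∑ = 0` of `ℝ^(m+1)`, pulled back to `ℝ^m`: the
projected permutohedron is a Voronoi cell for this structure, not for the standard one. -/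
def hyperplaneEmb : (Fin m → ℝ) →ₗ[ℝ] EuclideanSpace ℝ (Fin (m + 1)) :=
  (WithLp.linearEquiv 2 ℝ (Fin (m + 1) → ℝ)).symm.toLinearMap ∘ₗ snocNegSum m

theorem hyperplaneEmb_injective : Function.Injective (hyperplaneEmb m) := fun y w h => by
  rw [← init_snocNegSum y, ← init_snocNegSum w]
  exact congrArg (fun v => Fin.init (WithLp.ofLp v)) h

theorem inner_hyperplaneEmb (y w : Fin m → ℝ) :
    inner ℝ (hyperplaneEmb m y) (hyperplaneEmb m w) = snocNegSum m y ⬝ᵥ snocNegSum m w := by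
  simp [hyperplaneEmb, EuclideanSpace.inner_toLp_toLp, dotProduct_comm]

theorem norm_hyperplaneEmb_sq (y : Fin m → ℝ) :
    ‖hyperplaneEmb m y‖ ^ 2 = snocNegSum m y ⬝ᵥ snocNegSum m y := by
  rw [← real_inner_self_eq_norm_sq, inner_hyperplaneEmb]

variable (m) in
def latticeMatrix : Matrix (Fin m) (Fin m) ℝ := (m + 1 : ℝ) • 1 - Matrix.of fun _ _ => 1

theorem det_latticeMatrix : (latticeMatrix m).det = (m + 1) ^ (m - 1) := by
  have hm : (m + 1 : ℝ) ≠ 0 := by positivity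
  have : latticeMatrix m = (m + 1 : ℝ) • ((1 : Matrix (Fin m) (Fin m) ℝ) +
      Matrix.replicateCol Unit (fun _ : Fin m => -(m + 1 : ℝ)⁻¹) *
        Matrix.replicateRow Unit (fun _ : Fin m => (1 : ℝ))) := by
    ext i j
    simp only [latticeMatrix, Matrix.sub_apply, Matrix.smul_apply, Matrix.one_apply, smul_eq_mul,
      mul_ite, mul_one, mul_zero, Matrix.of_apply, Matrix.add_apply, Matrix.mul_apply, univ_unique,
      Matrix.replicateCol_apply, Matrix.replicateRow_apply, sum_const, card_singleton, one_smul]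
    split_ifs <;> field_simp <;> ring
  rw [this, Matrix.det_smul, Matrix.det_one_add_replicateCol_mul_replicateRow]
  simp only [dotProduct, one_mul, sum_const, card_univ, Fintype.card_fin, nsmul_eq_mul]
  rcases m with _ | k
  · simp
  · rw [Nat.add_sub_cancel, pow_succ]
    field_simp
    ring

variable (m) in
noncomputable def latticeBasis : Module.Basis (Fin m) ℝ (Fin m → ℝ) :=
  basisOfLinearIndependentOfCardEqFinrank' _
    (Matrix.linearIndependent_rows_of_det_ne_zero (by rw [det_latticeMatrix]; positivity))
    (by simp)

theorem coe_latticeBasis : ⇑(latticeBasis m) = latticeMatrix m := by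
  simp [latticeBasis]

variable (m) in
/-- Seen in the hyperplane through `snocNegSum`, this is the lattice of integer vectors with all
coordinates congruent modulo `m + 1`, i.e. `m + 1` times the dual root lattice `A_m^*`. -/
abbrev lattice : Submodule ℤ (Fin m → ℝ) := Submodule.span ℤ (Set.range (latticeBasis m))

variable (m) in
def hyperplaneIndicator (S : Finset (Fin (m + 1))) : Fin (m + 1) → ℝ :=
  fun j => (m + 1) * (if j ∈ S then 1 else 0) - #S

theorem latticeBasis_apply (i : Fin m) :
    latticeBasis m i = Fin.init (hyperplaneIndicator m {i.castSucc}) := by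
  ext j
  simp [coe_latticeBasis, latticeMatrix, hyperplaneIndicator, Fin.init, Matrix.one_apply, eq_comm]

theorem sum_hyperplaneIndicator (S : Finset (Fin (m + 1))) :
    ∑ j, hyperplaneIndicator m S j = 0 := by
  simp only [hyperplaneIndicator, mul_ite, mul_one, mul_zero, sum_sub_distrib, sum_ite_mem,
    univ_inter, sum_const, nsmul_eq_mul, card_univ, Fintype.card_fin]
  push_cast
  ring

theorem hyperplaneIndicator_compl (S : Finset (Fin (m + 1))) :
    hyperplaneIndicator m Sᶜ = -hyperplaneIndicator m S := by
  have hc : (#Sᶜ : ℝ) = m + 1 - #S := by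
    rw [card_compl, Fintype.card_fin, Nat.cast_sub (by simpa using card_le_univ S)]
    push_cast; ring
  ext j
  by_cases hj : j ∈ S <;> simp [hyperplaneIndicator, hj, hc]

theorem init_hyperplaneIndicator_mem_lattice (S : Finset (Fin (m + 1))) :
    Fin.init (hyperplaneIndicator m S) ∈ lattice m := by
  wlog hS : Fin.last m ∉ S generalizing S
  · have h := neg_mem (this Sᶜ (by simpa using hS))
    rw [hyperplaneIndicator_compl] at h
    exact (neg_neg (Fin.init (hyperplaneIndicator m S))) ▸ h
  have hcard : #S = #(univ.filter fun i : Fin m => i.castSucc ∈ S) := by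
    have hmap : (univ.filter fun i : Fin m => i.castSucc ∈ S).map Fin.castSuccEmb = S := by
      ext j
      induction j using Fin.lastCases <;> simp [hS]
    exact (congrArg card hmap).symm.trans (card_map _)
  have : Fin.init (hyperplaneIndicator m S) =
      ∑ i ∈ univ.filter (fun i : Fin m => i.castSucc ∈ S), latticeBasis m i := by
    ext k
    simp [latticeBasis_apply, hyperplaneIndicator, Fin.init, hcard]
  rw [this]
  exact sum_mem fun i _ => Submodule.subset_span ⟨i, rfl⟩

theorem exists_int_of_mem_lattice {l : Fin m → ℝ} (hl : l ∈ lattice m) :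
    ∃ c : Fin (m + 1) → ℤ, (∀ j, snocNegSum m l j = c j) ∧ ∀ j k, (m + 1 : ℤ) ∣ c j - c k := by
  induction hl using Submodule.span_induction with
  | mem x hx =>
    obtain ⟨i, rfl⟩ := hx
    refine ⟨fun j => (m + 1) * (if j = i.castSucc then 1 else 0) - 1, fun j => ?_, fun j k => ?_⟩
    · rw [latticeBasis_apply, snocNegSum_init (sum_hyperplaneIndicator _)]
      simp [hyperplaneIndicator]
    · exact ⟨(if j = i.castSucc then 1 else 0) - (if k = i.castSucc then 1 else 0), by ring⟩
  | zero => exact ⟨0, by simp, by simp⟩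
  | add x y _ _ hx hy =>
    obtain ⟨c, hc, hcd⟩ := hx
    obtain ⟨d, hd, hdd⟩ := hy
    refine ⟨c + d, fun j => by simp [hc, hd], fun j k => ?_⟩
    simpa [add_sub_add_comm] using dvd_add (hcd j k) (hdd j k)
  | smul a x _ hx =>
    obtain ⟨c, hc, hcd⟩ := hx
    refine ⟨a • c, fun j => by rw [map_zsmul, Pi.smul_apply, hc]; simp, fun j k => ?_⟩
    simpa [mul_sub] using (hcd j k).mul_left a

theorem sum_perm_sub_half (σ : Equiv.Perm (Fin (m + 1))) :
    ∑ j, (((σ j : ℕ) : ℝ) - m / 2) = 0 := by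
  rw [Equiv.sum_comp σ fun j => ((j : ℕ) : ℝ) - m / 2,
    Fin.sum_univ_eq_sum_range (fun k => (k : ℝ) - m / 2)]
  have := sum_range_natCast_sub_half (N := m + 1) (t := m + 1)
  push_cast at this
  simpa using this

variable (m) in
noncomputable def permVertex (σ : Equiv.Perm (Fin (m + 1))) : Fin m → ℝ :=
  Fin.init fun j => ((σ j : ℕ) : ℝ) - m / 2

theorem snocNegSum_permVertex (σ : Equiv.Perm (Fin (m + 1))) :
    snocNegSum m (permVertex m σ) = fun j => ((σ j : ℕ) : ℝ) - m / 2 :=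
  snocNegSum_init (sum_perm_sub_half σ)

theorem permVertex_mem_voronoiCell (σ : Equiv.Perm (Fin (m + 1))) :
    permVertex m σ ∈ voronoiCell (hyperplaneEmb m) (lattice m) := by
  rw [mem_voronoiCell_iff]
  intro l hl
  obtain ⟨c, hc, hcd⟩ := exists_int_of_mem_lattice hl
  have hsumR : ∑ j, (c j : ℝ) = 0 := by simpa only [hc] using sum_snocNegSum l
  have hsum : ∑ j, c j = 0 := by exact_mod_cast hsumR
  have key := two_mul_sum_mul_le_sum_sq (N := m + 1) (c ∘ σ.symm)
    (by rwa [Function.comp_def, Equiv.sum_comp σ.symm c]) (fun j k => by push_cast; exact hcd _ _)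
  rw [← Equiv.sum_comp σ, ← Equiv.sum_comp σ (fun k => (c ∘ σ.symm) k ^ 2)] at key
  simp only [Function.comp_apply, Equiv.symm_apply_apply] at key
  rw [inner_hyperplaneEmb, norm_hyperplaneEmb_sq, snocNegSum_permVertex, funext hc]
  have keyR : 2 * ∑ j, ((σ j : ℕ) : ℝ) * c j ≤ ∑ j, (c j : ℝ) ^ 2 := by exact_mod_cast key
  simpa [dotProduct, sub_mul, sum_sub_distrib, ← mul_sum, hsumR, sq] using keyR

theorem dotProduct_hyperplaneIndicator {v : Fin (m + 1) → ℝ} (hv : ∑ j, v j = 0)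
    (S : Finset (Fin (m + 1))) : v ⬝ᵥ hyperplaneIndicator m S = (m + 1) * ∑ j ∈ S, v j := by
  simp only [dotProduct, hyperplaneIndicator, mul_sub, sum_sub_distrib, ← sum_mul, hv, zero_mul,
    sub_zero, mul_ite, mul_one, mul_zero, sum_ite_mem, univ_inter]
  ring

theorem sum_hyperplaneIndicator_self (S : Finset (Fin (m + 1))) :
    ∑ j ∈ S, hyperplaneIndicator m S j = #S * (m + 1 - #S) := by
  rw [sum_congr rfl (g := fun _ => (m + 1 : ℝ) - #S) fun j hj => by
    simp [hyperplaneIndicator, hj], sum_const, nsmul_eq_mul]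

theorem sum_le_of_mem_voronoiCell {y : Fin m → ℝ}
    (hy : y ∈ voronoiCell (hyperplaneEmb m) (lattice m)) (S : Finset (Fin (m + 1))) :
    ∑ j ∈ S, snocNegSum m y j ≤ #S * (m + 1 - #S) / 2 := by
  have h := mem_voronoiCell_iff.mp hy _ (init_hyperplaneIndicator_mem_lattice S)
  rw [inner_hyperplaneEmb, norm_hyperplaneEmb_sq, snocNegSum_init (sum_hyperplaneIndicator S),
    dotProduct_hyperplaneIndicator (sum_snocNegSum y),
    dotProduct_hyperplaneIndicator (sum_hyperplaneIndicator S), sum_hyperplaneIndicator_self,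
    mul_left_comm] at h
  have := le_of_mul_le_mul_left h (by positivity)
  linarith

theorem voronoiCell_subset_convexHull :
    voronoiCell (hyperplaneEmb m) (lattice m) ⊆ convexHull ℝ (Set.range (permVertex m)) := by
  intro y hy
  by_contra hyP
  obtain ⟨f, u, hfv, hfy⟩ := geometric_hahn_banach_closed_point (convex_convexHull ℝ _)
    ((Set.finite_range _).isClosed_convexHull (𝕜 := ℝ)) hyP
  set φ : Fin (m + 1) → ℝ := Fin.snoc (fun i => f fun j => if i = j then 1 else 0) 0
  have hφ : ∀ w, ∑ j, φ j * snocNegSum m w j = f w := fun w => by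
    have hf := (f : (Fin m → ℝ) →ₗ[ℝ] ℝ).pi_apply_eq_sum_univ w
    simp only [ContinuousLinearMap.coe_coe, smul_eq_mul] at hf
    rw [hf, Fin.sum_univ_castSucc]
    simp [φ, snocNegSum, mul_comm]
  obtain ⟨σ, hσ⟩ := exists_perm_sum_mul_le φ (snocNegSum m y) (sum_snocNegSum y) fun S => by
    push_cast; exact sum_le_of_mem_voronoiCell hy S
  have hv : ∑ j, φ j * (((σ j : ℕ) : ℝ) - ((m + 1 : ℕ) - 1) / 2) = f (permVertex m σ) := by
    rw [← hφ, snocNegSum_permVertex]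
    push_cast
    exact sum_congr rfl fun j _ => by ring
  have := hfv _ (subset_convexHull ℝ _ ⟨σ, rfl⟩)
  linarith [hφ y]

theorem convexHull_permVertex :
    convexHull ℝ (Set.range (permVertex m)) = voronoiCell (hyperplaneEmb m) (lattice m) :=
  (convexHull_min (Set.range_subset_iff.mpr permVertex_mem_voronoiCell)
    (convex_voronoiCell _ _)).antisymm voronoiCell_subset_convexHull

theorem measureReal_voronoiCell :
    volume.real (voronoiCell (hyperplaneEmb m) (lattice m)) = (m + 1) ^ (m - 1) := by
  rw [← covolume_eq_measureReal_voronoiCell (L := lattice m) volume hyperplaneEmb_injective,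
    covolume_span_eq_abs_det, coe_latticeBasis]
  change |(latticeMatrix m).det| = _
  rw [det_latticeMatrix, abs_of_nonneg (by positivity)]

open scoped Pointwise in
theorem image_init_permutohedron (hm : m ≠ 0) :
    (Fin.init : (Fin (m + 1) → ℝ) → Fin m → ℝ) ''
        permutohedron (m + 1) (fun j => ((m : ℝ) - (j : ℕ)) / m) =
      (fun _ : Fin m => (1 / 2 : ℝ)) +ᵥ
        (-(m : ℝ)⁻¹) • voronoiCell (hyperplaneEmb m) (lattice m) := by
  have hvert : {y | ∃ σ : Equiv.Perm (Fin (m + 1)), ∀ i, y i = ((m : ℝ) - (σ i : ℕ)) / m} =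
      Set.range fun (σ : Equiv.Perm (Fin (m + 1))) i => ((m : ℝ) - (σ i : ℕ)) / m := by
    ext y
    simp [funext_iff, eq_comm]
  rw [← convexHull_permVertex, ← convexHull_smul, ← convexHull_vadd, permutohedron, hvert]
  change LinearMap.funLeft ℝ ℝ Fin.castSucc '' _ = _
  rw [LinearMap.image_convexHull, ← Set.range_comp, ← Set.range_smul, ← Set.range_vadd]
  congr 1
  refine congrArg Set.range (funext fun σ => funext fun i => ?_)
  simp only [Function.comp_apply, LinearMap.funLeft_apply, permVertex, Fin.init, Pi.vadd_apply',
    Pi.smul_apply, smul_eq_mul, vadd_eq_add]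
  field_simp
  ring

end Permutohedron

/-- the `(n-1)`-dimensional volume of the scaled regular permutohedron
`Π_n = P_n(1, (n-2)/(n-1), …, 1/(n-1), 0)`, i.e. the Lebesgue measure in `ℝ^{n-1}`
of its projection deleting the last coordinate, equals `n^{n-2} / (n-1)^{n-1}`. -/
theorem stmt10 (n : ℕ) (hn : 2 ≤ n) :
    (volume ((fun (y : Fin n → ℝ) (i : Fin (n - 1)) => y (Fin.castLE (Nat.sub_le n 1) i)) ''
        permutohedron n (fun i => ((n : ℝ) - 1 - (i : ℕ)) / ((n : ℝ) - 1)))).toReal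
      = (n : ℝ) ^ (n - 2) / ((n : ℝ) - 1) ^ (n - 1) := by
  obtain ⟨m, rfl⟩ : ∃ m, n = m + 1 := ⟨n - 1, by omega⟩
  have hm : m ≠ 0 := by omega
  have hx : (fun i : Fin (m + 1) => (((m + 1 : ℕ) : ℝ) - 1 - (i : ℕ)) / (((m + 1 : ℕ) : ℝ) - 1)) =
      fun i : Fin (m + 1) => ((m : ℝ) - (i : ℕ)) / m := by
    funext i
    push_cast
    ring
  change (volume (Fin.init '' permutohedron (m + 1) _)).toReal = _
  rw [hx, Permutohedron.image_init_permutohedron hm, measure_vadd, Measure.addHaar_smul,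
    ENNReal.toReal_mul, ← measureReal_def, Permutohedron.measureReal_voronoiCell,
    Module.finrank_fin_fun, ENNReal.toReal_ofReal (abs_nonneg _), abs_pow, abs_neg, abs_inv,
    Nat.abs_cast, show m + 1 - 2 = m - 1 by omega, Nat.add_sub_cancel]
  push_cast
  rw [add_sub_cancel_right, inv_pow]
  ring
end

section
/- Let n ≥ 3, let j ∈ {1, …, n−1}, and let u ∈ [(j−1)/(n−1), j/(n−1)]. Then the section of the scaled regular permutohedron by the hyperplane {x ∈ ℝ^n : x_1 = u} is itself a scaled permutohedron: { y ∈ ℝ^{n−1} : (u, y) ∈ Π_n } = (n−1)^{−1} · P_{n−1}( n−1, n−2, …, j+1, 2j−1−(n−1)u, j−2, …, 1, 0 ), where the middle entry 2j−1−(n−1)u replaces the entries j and j−1. -/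
open Pointwise

/-!
By Rado's theorem, the permutohedron of a decreasing vector `x` is its majorization polytope
`{y | ∑ y = ∑ x, ∑_{i ∈ S} y i ≤ x 0 + ⋯ + x (#S - 1) for all S}`. The nontrivial inclusion is
proved by separation: a linear functional `∑ c i * y i` with sorted coefficients is bounded on the
polytope by Abel summation, hence by its value at a permutation of `x`.

Fixing the first coordinate `u` with `x (p + 1) ≤ u ≤ x p` turns the constraints on the remaining
coordinates into `∑_{i ∈ S} y i ≤ min (x 0 + ⋯ + x (k - 1)) (x 0 + ⋯ + x k - u)`, `k = #S`. These
minima are the prefix sums of the vector obtained from `x` by replacing the two entries `x p`,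
`x (p + 1)` with `x p + x (p + 1) - u`, so the section is again a permutohedron. For `Π_n` and
`p = m - j` this is the vector of the statement, scaled by `m⁻¹`.
-/

open Finset

namespace Permutohedron

variable {m : ℕ}

def prefixSum (x : Fin m → ℝ) (k : ℕ) : ℝ := ∑ i ∈ univ.filter (fun i : Fin m => ↑i < k), x i

lemma prefixSum_succ (x : Fin m → ℝ) {k : ℕ} (hk : k < m) :
    prefixSum x (k + 1) = prefixSum x k + x ⟨k, hk⟩ := by
  have : univ.filter (fun i : Fin m => ↑i < k + 1)
      = insert ⟨k, hk⟩ (univ.filter fun i : Fin m => ↑i < k) := by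
    ext i
    simp only [mem_filter, mem_univ, true_and, mem_insert, Fin.ext_iff]
    omega
  rw [prefixSum, this, sum_insert (by simp), add_comm, prefixSum]

lemma prefixSum_of_le (x : Fin m → ℝ) {k : ℕ} (hk : m ≤ k) : prefixSum x k = ∑ i, x i := by
  rw [prefixSum, filter_true_of_mem fun i _ => i.2.trans_le hk]

lemma prefixSum_castSucc (x : Fin (m + 1) → ℝ) {k : ℕ} (hk : k ≤ m) :
    prefixSum (fun i => x i.castSucc) k = prefixSum x k := by
  simp only [prefixSum, sum_filter, Fin.sum_univ_castSucc, Fin.val_castSucc, Fin.val_last,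
    if_neg (not_lt.2 hk), add_zero]

lemma sum_le_prefixSum_card {x : Fin m → ℝ} (hx : Antitone x) (S : Finset (Fin m)) :
    ∑ i ∈ S, x i ≤ prefixSum x #S := by
  set P := univ.filter fun i : Fin m => ↑i < #S
  have hP : #P = #S := by
    rw [Fin.card_filter_val_lt, min_eq_right (by simpa using card_le_univ S)]
  suffices ∑ i ∈ S \ P, x i ≤ ∑ i ∈ P \ S, x i by
    rw [prefixSum, ← sum_inter_add_sum_sdiff S P, ← sum_inter_add_sum_sdiff P S, inter_comm]
    linarith
  obtain h | hne := (S \ P).eq_empty_or_nonempty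
  · have : P \ S = ∅ := by rw [← card_eq_zero, ← card_sdiff_comm hP.symm, h, card_empty]
    simp [h, this]
  obtain ⟨a, ha, hmax⟩ := exists_max_image (S \ P) x hne
  calc ∑ i ∈ S \ P, x i ≤ #(S \ P) • x a := sum_le_card_nsmul _ _ _ hmax
    _ = #(P \ S) • x a := by rw [card_sdiff_comm hP.symm]
    _ ≤ ∑ i ∈ P \ S, x i := card_nsmul_le_sum _ _ _ fun i hi => hx <| by
        simp only [P, mem_sdiff, mem_filter, mem_univ, true_and] at ha hi
        exact Fin.le_def.2 (by omega)

lemma sum_mul_nonneg_of_prefixSum_nonneg {d e : Fin m → ℝ} (hd : Antitone d) (hd₀ : 0 ≤ d)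
    (he : ∀ k ≤ m, 0 ≤ prefixSum e k) : 0 ≤ ∑ i, d i * e i := by
  induction m with
  | zero => simp
  | succ m ih =>
    -- splitting off the smallest weight `d (last m)` leaves nonnegative antitone weights
    have key : ∑ i, d i * e i
        = ∑ i : Fin m, (d i.castSucc - d (Fin.last m)) * e i.castSucc
          + d (Fin.last m) * ∑ i, e i := by
      simp only [Fin.sum_univ_castSucc, sub_mul, sum_sub_distrib, mul_add, ← mul_sum]
      ring
    rw [key]
    refine add_nonneg (ih (fun i j hij => ?_) (fun i => sub_nonneg.2 (hd (Fin.le_last _)))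
      fun k hk => ?_) ?_
    · simpa using hd (Fin.castSucc_le_castSucc_iff.2 hij)
    · rw [prefixSum_castSucc e hk]; exact he k (by omega)
    · rw [← prefixSum_of_le e le_rfl]; exact mul_nonneg (hd₀ _) (he _ le_rfl)

lemma sum_mul_le_sum_mul_of_prefixSum_le {d x y : Fin m → ℝ} (hd : Antitone d)
    (hxy : ∀ k ≤ m, prefixSum y k ≤ prefixSum x k) (hsum : ∑ i, y i = ∑ i, x i) :
    ∑ i, d i * y i ≤ ∑ i, d i * x i := by
  cases m with
  | zero => simp
  | succ m =>
    -- shifting the weights by a constant does not change `∑ d (x - y)`, since `∑ (x - y) = 0`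
    have key : ∑ i, d i * x i - ∑ i, d i * y i
        = ∑ i, (d i - d (Fin.last m)) * (x i - y i) := by
      simp only [sub_mul, mul_sub, sum_sub_distrib, ← mul_sum, hsum]
      ring
    have hnonneg := sum_mul_nonneg_of_prefixSum_nonneg (d := fun i => d i - d (Fin.last m))
      (e := fun i => x i - y i) (fun i j hij => by simpa using hd hij)
      (fun i => sub_nonneg.2 (hd (Fin.le_last i))) fun k hk => by
        simpa [prefixSum, sum_sub_distrib] using hxy k hk
    linarith

def majorizationSet (x : Fin m → ℝ) : Set (Fin m → ℝ) :=
  {y | ∑ i, y i = ∑ i, x i ∧ ∀ S : Finset (Fin m), ∑ i ∈ S, y i ≤ prefixSum x #S}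

lemma permutohedron_eq_convexHull_range (x : Fin m → ℝ) :
    permutohedron m x = convexHull ℝ (Set.range fun σ : Equiv.Perm (Fin m) => x ∘ σ) := by
  have : {y | ∃ σ : Equiv.Perm (Fin m), ∀ i, y i = x (σ i)}
      = Set.range fun σ : Equiv.Perm (Fin m) => x ∘ σ := by
    ext y
    exact ⟨fun ⟨σ, hσ⟩ => ⟨σ, funext fun i => (hσ i).symm⟩, fun ⟨σ, hσ⟩ => ⟨σ, by simp [← hσ]⟩⟩
  rw [permutohedron, this]

lemma permutohedron_subset_majorizationSet {x : Fin m → ℝ} (hx : Antitone x) :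
    permutohedron m x ⊆ majorizationSet x := by
  rw [permutohedron_eq_convexHull_range]
  refine convexHull_min ?_ fun y hy z hz a b ha hb hab => ⟨?_, fun S => ?_⟩
  · rintro _ ⟨σ, rfl⟩
    refine ⟨Equiv.sum_comp σ x, fun S => ?_⟩
    simpa [sum_map, card_map] using sum_le_prefixSum_card hx (S.map σ.toEmbedding)
  · simp [sum_add_distrib, ← mul_sum, hy.1, hz.1, ← add_mul, hab]
  · have h := add_le_add (mul_le_mul_of_nonneg_left (hy.2 S) ha)
      (mul_le_mul_of_nonneg_left (hz.2 S) hb)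
    simpa [sum_add_distrib, ← mul_sum, ← add_mul, hab] using h

lemma exists_perm_apply_le_of_mem_majorizationSet {x y : Fin m → ℝ}
    (hy : y ∈ majorizationSet x) (f : (Fin m → ℝ) →ₗ[ℝ] ℝ) :
    ∃ σ : Equiv.Perm (Fin m), f y ≤ f (x ∘ σ) := by
  set c : Fin m → ℝ := fun i => f fun j => if i = j then 1 else 0
  have hf : ∀ v, f v = ∑ i, c i * v i := fun v => by
    simp [LinearMap.pi_apply_eq_sum_univ f v, c, mul_comm]
  set τ := Tuple.sort fun i => -c i
  have hc : Antitone (c ∘ τ) := fun i j hij => by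
    simpa using Tuple.monotone_sort (fun i => -c i) hij
  refine ⟨τ.symm, ?_⟩
  rw [hf, hf, ← Equiv.sum_comp τ, ← Equiv.sum_comp τ (fun i => c i * (x ∘ τ.symm) i)]
  simp only [Function.comp_apply, Equiv.symm_apply_apply]
  refine sum_mul_le_sum_mul_of_prefixSum_le hc (fun k hk => ?_) ((Equiv.sum_comp τ y).trans hy.1)
  have h := hy.2 ((univ.filter fun i : Fin m => ↑i < k).map τ.toEmbedding)
  rwa [sum_map, card_map, Fin.card_filter_val_lt, min_eq_right hk] at h

theorem permutohedron_eq_majorizationSet {x : Fin m → ℝ} (hx : Antitone x) :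
    permutohedron m x = majorizationSet x := by
  refine (permutohedron_subset_majorizationSet hx).antisymm fun y hy => ?_
  rw [permutohedron_eq_convexHull_range]
  by_contra hny
  obtain ⟨f, s, hf, hfy⟩ := geometric_hahn_banach_closed_point (convex_convexHull ℝ _)
    ((Set.finite_range _).isClosed_convexHull (𝕜 := ℝ)) hny
  obtain ⟨σ, hσ⟩ := exists_perm_apply_le_of_mem_majorizationSet hy f.toLinearMap
  have := hf _ (subset_convexHull ℝ _ ⟨σ, rfl⟩)
  simp only [ContinuousLinearMap.coe_coe] at hσ
  linarith

lemma smul_permutohedron (c : ℝ) (x : Fin m → ℝ) :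
    c • permutohedron m x = permutohedron m (c • x) := by
  rw [permutohedron_eq_convexHull_range, permutohedron_eq_convexHull_range, ← convexHull_smul,
    ← Set.range_smul]
  rfl

def mergeAt (x : Fin (m + 1) → ℝ) (p : Fin m) (u : ℝ) : Fin m → ℝ := fun i =>
  if i < p then x i.castSucc else if i = p then x p.castSucc + x p.succ - u else x i.succ

lemma prefixSum_mergeAt (x : Fin (m + 1) → ℝ) (p : Fin m) (u : ℝ) {k : ℕ} (hk : k ≤ m) :
    prefixSum (mergeAt x p u) k = if k ≤ p then prefixSum x k else prefixSum x (k + 1) - u := by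
  induction k with
  | zero => simp [prefixSum]
  | succ k ih =>
    obtain ⟨p, hp⟩ := p
    have hx₁ := prefixSum_succ x (by omega : k < m + 1)
    have hx₂ := prefixSum_succ x (by omega : k + 1 < m + 1)
    rw [prefixSum_succ _ hk, ih (by omega)]
    simp only [mergeAt, Fin.mk_lt_mk, Fin.mk.injEq, Fin.castSucc_mk, Fin.succ_mk]
    rcases lt_trichotomy k p with h | rfl | h
    · rw [if_pos h.le, if_pos h, if_pos (Nat.succ_le_of_lt h), hx₁]
    · rw [if_pos le_rfl, if_neg (lt_irrefl k), if_pos rfl, if_neg (by omega), hx₂, hx₁]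
      ring
    · rw [if_neg h.not_ge, if_neg h.not_gt, if_neg h.ne', if_neg (by omega), hx₂]
      ring

section Merge

variable {x : Fin (m + 1) → ℝ} {p : Fin m} {u : ℝ}

lemma antitone_mergeAt (hx : Antitone x) (hu₁ : x p.succ ≤ u) (hu₂ : u ≤ x p.castSucc) :
    Antitone (mergeAt x p u) := by
  have hx' : ∀ a b : Fin (m + 1), (a : ℕ) ≤ b → x b ≤ x a := fun a b h => hx (Fin.le_def.2 h)
  intro i j hij
  rw [Fin.le_def] at hij
  simp only [mergeAt, Fin.lt_def, Fin.ext_iff]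
  split_ifs <;> first
    | linarith [hx' i.castSucc j.castSucc (by simpa using hij)]
    | linarith [hx' i.castSucc p.castSucc (by simp; omega)]
    | linarith [hx' i.castSucc j.succ (by simp; omega)]
    | linarith [hx' p.succ j.succ (by simp; omega)]
    | linarith [hx' i.succ j.succ (by simpa using hij)]
    | omega

lemma prefixSum_mergeAt_eq_min (hx : Antitone x) (hu₁ : x p.succ ≤ u) (hu₂ : u ≤ x p.castSucc)
    {k : ℕ} (hk : k ≤ m) :
    prefixSum (mergeAt x p u) k = min (prefixSum x k) (prefixSum x (k + 1) - u) := by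
  rw [prefixSum_mergeAt x p u hk, prefixSum_succ x (by omega : k < m + 1)]
  split_ifs with h
  · have : u ≤ x ⟨k, by omega⟩ := hu₂.trans (hx (Fin.le_def.2 (by simpa using h)))
    rw [min_eq_left (by linarith)]
  · have : x ⟨k, by omega⟩ ≤ u := (hx (Fin.le_def.2 (by simp; omega))).trans hu₁
    rw [min_eq_right (by linarith)]

end Merge

lemma sum_cons_eq_ite_add (T : Finset (Fin (m + 1))) (u : ℝ) (y : Fin m → ℝ) :
    ∑ i ∈ T, (Fin.cons u y : Fin (m + 1) → ℝ) i
      = (if 0 ∈ T then u else 0) + ∑ i ∈ univ.filter (fun i => i.succ ∈ T), y i := by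
  rw [← univ_inter T, ← sum_ite_mem, Fin.sum_univ_succ, sum_filter]
  simp

lemma card_eq_ite_add (T : Finset (Fin (m + 1))) :
    #T = (if 0 ∈ T then 1 else 0) + #(univ.filter fun i : Fin m => i.succ ∈ T) := by
  simpa using Fin.card_filter_univ_succ' (· ∈ T)

theorem setOf_cons_mem_permutohedron {x : Fin (m + 1) → ℝ} (hx : Antitone x) {p : Fin m} {u : ℝ}
    (hu₁ : x p.succ ≤ u) (hu₂ : u ≤ x p.castSucc) :
    {y | Fin.cons u y ∈ permutohedron (m + 1) x} = permutohedron m (mergeAt x p u) := by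
  have hmin := fun S : Finset (Fin m) =>
    prefixSum_mergeAt_eq_min hx hu₁ hu₂ (by simpa using card_le_univ S)
  have htotal : ∑ i, mergeAt x p u i = ∑ i, x i - u := by
    rw [← prefixSum_of_le _ le_rfl, prefixSum_mergeAt x p u le_rfl, if_neg (by omega),
      prefixSum_of_le _ le_rfl]
  ext y
  rw [Set.mem_ofPred_eq, permutohedron_eq_majorizationSet hx,
    permutohedron_eq_majorizationSet (antitone_mergeAt hx hu₁ hu₂)]
  simp only [majorizationSet, Set.mem_ofPred_eq, Fin.sum_cons, htotal, hmin, le_min_iff]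
  constructor
  · rintro ⟨hsum, hT⟩
    refine ⟨by linarith, fun S => ⟨?_, ?_⟩⟩
    · simpa [sum_cons_eq_ite_add, card_eq_ite_add] using hT (S.map (Fin.succEmb m))
    · have h0 : 0 ∉ S.map (Fin.succEmb m) := by simp
      have h := hT (insert 0 (S.map (Fin.succEmb m)))
      rw [sum_insert h0, card_insert_of_notMem h0, sum_map, card_map] at h
      simp only [Fin.cons_zero, Fin.coe_succEmb, Fin.cons_succ] at h
      linarith
  · rintro ⟨hsum, hS⟩
    refine ⟨by linarith, fun T => ?_⟩
    rw [sum_cons_eq_ite_add, card_eq_ite_add]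
    by_cases h0 : 0 ∈ T
    · rw [if_pos h0, if_pos h0, add_comm 1]
      linarith [(hS (univ.filter fun i : Fin m => i.succ ∈ T)).2]
    · rw [if_neg h0, if_neg h0, zero_add, zero_add]
      exact (hS _).1

end Permutohedron

open Permutohedron

theorem stmt11_general (m : ℕ) (j : ℕ) (hj1 : 1 ≤ j) (hj2 : j ≤ m)
    (u : ℝ) (hu : u ∈ Set.Icc (((j : ℝ) - 1) / (m : ℝ)) ((j : ℝ) / (m : ℝ))) :
    {y : Fin m → ℝ |
        Fin.cons u y ∈ permutohedron (m + 1) (fun i => ((m : ℝ) - (i : ℕ)) / (m : ℝ))}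
      = ((m : ℝ)⁻¹) • permutohedron m (fun i =>
          if (i : ℕ) < m - j then (m : ℝ) - (i : ℕ)
          else if (i : ℕ) = m - j then 2 * (j : ℝ) - 1 - (m : ℝ) * u
          else (m : ℝ) - 1 - (i : ℕ)) := by
  have hm : (0 : ℝ) < m := Nat.cast_pos.2 (by omega)
  have hjm : ((m - j : ℕ) : ℝ) = m - j := Nat.cast_sub hj2
  set X : Fin (m + 1) → ℝ := fun i => ((m : ℝ) - (i : ℕ)) / (m : ℝ)
  set p : Fin m := ⟨m - j, by omega⟩
  have hX : Antitone X := fun a b hab =>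
    div_le_div_of_nonneg_right (sub_le_sub_left (Nat.cast_le.2 hab) _) hm.le
  have hu₁ : X p.succ ≤ u := hu.1.trans_eq' <| by
    simp only [X, p, Fin.succ_mk, Nat.cast_add, Nat.cast_one, hjm]
    ring
  have hu₂ : u ≤ X p.castSucc := hu.2.trans_eq <| by simp [X, p, hjm]
  rw [smul_permutohedron, setOf_cons_mem_permutohedron hX hu₁ hu₂]
  congr 1
  funext i
  simp only [mergeAt, X, p, Fin.lt_def, Fin.ext_iff, Fin.val_castSucc, Fin.val_succ,
    Pi.smul_apply, smul_eq_mul]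
  split_ifs <;> field_simp <;> push_cast [hjm] <;> ring

/-- for `n = m+1 ≥ 3`, `j ∈ {1, …, n-1}` and
`u ∈ [(j-1)/(n-1), j/(n-1)]`, the section of the scaled regular permutohedron
`Π_n = P_n(1, (n-2)/(n-1), …, 1/(n-1), 0)` by the hyperplane `{x : x_1 = u}` is
`(n-1)⁻¹ · P_{n-1}(n-1, n-2, …, j+1, 2j-1-(n-1)u, j-2, …, 1, 0)`,
where the entry `2j-1-(n-1)u` replaces the entries `j` and `j-1`. -/
theorem stmt11 (m : ℕ) (hm : 2 ≤ m) (j : ℕ) (hj1 : 1 ≤ j) (hj2 : j ≤ m)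
    (u : ℝ) (hu : u ∈ Set.Icc (((j : ℝ) - 1) / (m : ℝ)) ((j : ℝ) / (m : ℝ))) :
    {y : Fin m → ℝ |
        Fin.cons u y ∈ permutohedron (m + 1) (fun i => ((m : ℝ) - (i : ℕ)) / (m : ℝ))}
      = ((m : ℝ)⁻¹) • permutohedron m (fun i =>
          if (i : ℕ) < m - j then (m : ℝ) - (i : ℕ)
          else if (i : ℕ) = m - j then 2 * (j : ℝ) - 1 - (m : ℝ) * u
          else (m : ℝ) - 1 - (i : ℕ)) :=
  stmt11_general m j hj1 hj2 u hu
end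

section
/- For n ≥ 2, every point u ∈ Π_n satisfies ‖u − (1/2)𝟙_n‖_2 ≤ √( n(n+1) / (12(n−1)) ), where 𝟙_n is the vector of ones and ‖·‖_2 is the Euclidean norm; moreover equality holds at each vertex of Π_n, i.e., at each permutation of (1, (n−2)/(n−1), …, 1/(n−1), 0). -/
/-! Permuting coordinates is an isometry of `ℝⁿ` fixing `½𝟙`, so all vertices of `Π_n` lie on
one sphere about `½𝟙`, and by convexity of the ball `Π_n` lies inside that sphere. The radius
is computed from `∑_{i<n} ((n-1)/2 - i)² = n(n²-1)/12`. -/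

/-- The permutohedron `P_n(x)` in Euclidean space: the convex hull of all vectors
obtained from `x` by permuting its coordinates. -/
noncomputable def permutohedronE (n : ℕ) (x : EuclideanSpace ℝ (Fin n)) :
    Set (EuclideanSpace ℝ (Fin n)) :=
  convexHull ℝ {y | ∃ σ : Equiv.Perm (Fin n), ∀ i, y i = x (σ i)}

lemma sum_range_sub_sq (a : ℝ) (n : ℕ) :
    ∑ i ∈ Finset.range n, (a - i) ^ 2
      = n * a ^ 2 - n * (n - 1) * a + n * (n - 1) * (2 * n - 1) / 6 := by
  induction n with
  | zero => simp
  | succ m ih => rw [Finset.sum_range_succ, ih]; push_cast; ring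

lemma EuclideanSpace.norm_eq_of_perm {ι : Type*} [Fintype ι] {x y : EuclideanSpace ℝ ι}
    (σ : Equiv.Perm ι) (h : ∀ i, y i = x (σ i)) : ‖y‖ = ‖x‖ := by
  simp only [EuclideanSpace.norm_eq, h]
  rw [Equiv.sum_comp σ (fun i => ‖x i‖ ^ 2)]

lemma permutohedronE_subset_closedBall (n : ℕ) (x : EuclideanSpace ℝ (Fin n)) (a : ℝ) :
    permutohedronE n x ⊆ Metric.closedBall ((WithLp.equiv 2 (Fin n → ℝ)).symm fun _ => a)
      ‖x - (WithLp.equiv 2 (Fin n → ℝ)).symm fun _ => a‖ := by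
  refine convexHull_min ?_ (convex_closedBall _ _)
  rintro y ⟨σ, hy⟩
  rw [Metric.mem_closedBall, dist_eq_norm]
  exact (EuclideanSpace.norm_eq_of_perm σ fun i => by simp [hy]).le

lemma norm_regularVertex_sub_half {n : ℕ} (hn : n ≠ 1) :
    ‖(WithLp.equiv 2 (Fin n → ℝ)).symm (fun i => ((n : ℝ) - 1 - (i : ℕ)) / ((n : ℝ) - 1))
        - (WithLp.equiv 2 (Fin n → ℝ)).symm (fun _ => 1 / 2)‖
      = Real.sqrt ((n : ℝ) * ((n : ℝ) + 1) / (12 * ((n : ℝ) - 1))) := by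
  have hn' : (n : ℝ) - 1 ≠ 0 := sub_ne_zero.mpr (by exact_mod_cast hn)
  have hcoord : ∀ i : ℕ, ((n : ℝ) - 1 - i) / ((n : ℝ) - 1) - 1 / 2
      = (((n : ℝ) - 1) / 2 - i) / ((n : ℝ) - 1) := fun i => by field_simp; ring
  rw [EuclideanSpace.norm_eq]
  congr 1
  simp only [PiLp.sub_apply, WithLp.equiv_symm_apply, Real.norm_eq_abs, sq_abs, hcoord, div_pow]
  rw [Fin.sum_univ_eq_sum_range (fun i => (((n : ℝ) - 1) / 2 - i) ^ 2 / ((n : ℝ) - 1) ^ 2),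
    ← Finset.sum_div, sum_range_sub_sq]
  field_simp
  ring

/-- every `u ∈ Π_n = P_n(1, (n-2)/(n-1), …, 1/(n-1), 0)` satisfies
`‖u - (1/2)𝟙_n‖₂ ≤ √(n(n+1)/(12(n-1)))`, with equality at each vertex of `Π_n`,
i.e. at each permutation of the generating vector. -/
theorem stmt12 (n : ℕ) (hn : 2 ≤ n) :
    (∀ u ∈ permutohedronE n
        ((WithLp.equiv 2 (Fin n → ℝ)).symm fun i => ((n : ℝ) - 1 - (i : ℕ)) / ((n : ℝ) - 1)),
      ‖u - (WithLp.equiv 2 (Fin n → ℝ)).symm (fun _ => 1 / 2)‖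
        ≤ Real.sqrt ((n : ℝ) * ((n : ℝ) + 1) / (12 * ((n : ℝ) - 1)))) ∧
    (∀ σ : Equiv.Perm (Fin n),
      ‖(WithLp.equiv 2 (Fin n → ℝ)).symm
            (fun i => ((n : ℝ) - 1 - ((σ i : Fin n) : ℕ)) / ((n : ℝ) - 1))
          - (WithLp.equiv 2 (Fin n → ℝ)).symm (fun _ => 1 / 2)‖
        = Real.sqrt ((n : ℝ) * ((n : ℝ) + 1) / (12 * ((n : ℝ) - 1)))) := by
  have hvertex := norm_regularVertex_sub_half (n := n) (by omega)
  refine ⟨fun u hu => ?_, fun σ => ?_⟩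
  · have := permutohedronE_subset_closedBall n _ (1 / 2) hu
    rwa [Metric.mem_closedBall, dist_eq_norm, hvertex] at this
  · rw [← hvertex]
    exact EuclideanSpace.norm_eq_of_perm σ fun i => rfl
end

section
/- Let α > 0, β > 0, let 0 ≤ u_(1) ≤ … ≤ u_(n) ≤ 1 be the order statistics of points u_1, …, u_n in [0,1], and let G_n be their empirical distribution function. Then ∫_0^1 (G_n(t) − t)² t^{α−1} (1−t)^{β−1} dt = (1/n) Σ_{j=1}^n [ 2 B(u_(j); α+1, β) − ((2j−1)/n) B(u_(j); α, β) ] + B(α, β+2), where B(x; a, c) = ∫_0^x t^{a−1}(1−t)^{c−1} dt is the incomplete beta function and B(a, c) = B(1; a, c). -/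
/-!
For sorted points (indexed from 0), `#{i | u_(i) ≤ t}² = Σ_{j < #{i | u_(i) ≤ t}} (2j + 1)`, so
`n² G_n(t)² = n² - Σ_j (2j + 1) 1{t < u_(j)}`. Hence, pointwise,
`(G_n(t) - t)² = (1 - t)² + n⁻¹ Σ_j (2t - (2j + 1)/n) 1{t < u_(j)}`, and integrating against
`t^{α-1} (1-t)^{β-1}` turns `(1 - t)²` into `B(α, β + 2)`, `t · 1{t < u_(j)}` into
`B(u_(j); α + 1, β)` and `1{t < u_(j)}` into `B(u_(j); α, β)`.
-/

noncomputable def incBeta (x a c : ℝ) : ℝ :=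
  ∫ t in (0 : ℝ)..x, t ^ (a - 1) * (1 - t) ^ (c - 1)

open MeasureTheory Set intervalIntegral

theorem sq_sum_ite_le_add_sum_ite_lt {α : Type*} [LinearOrder α] {n : ℕ} {u : Fin n → α}
    (hu : Monotone u) (t : α) :
    (∑ i, if u i ≤ t then (1 : ℝ) else 0) ^ 2
      + ∑ j : Fin n, (2 * (j : ℝ) + 1) * (if t < u j then 1 else 0) = (n : ℝ) ^ 2 := by
  induction n with
  | zero => simp
  | succ n ih =>
    have ih' := ih (hu.comp Fin.strictMono_castSucc.monotone)
    simp only [Function.comp_apply] at ih'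
    rw [Fin.sum_univ_castSucc, Fin.sum_univ_castSucc]
    simp only [Fin.val_castSucc, Fin.val_last]
    by_cases hlast : u (Fin.last n) ≤ t
    · have hall : ∀ i : Fin n, u i.castSucc ≤ t := fun i => (hu (Fin.le_last _)).trans hlast
      simp only [hall, hlast, if_true, not_lt.mpr hlast, if_false, Finset.sum_const,
        Finset.card_univ, Fintype.card_fin, nsmul_eq_mul, mul_one, mul_zero, add_zero] at ih' ⊢
      push_cast
      linear_combination ih'
    · simp only [hlast, if_false, not_le.mp hlast, if_true]
      push_cast
      linear_combination ih'

theorem sum_ite_le_add_sum_ite_lt {α : Type*} [LinearOrder α] {n : ℕ} (u : Fin n → α) (t : α) :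
    (∑ i, if u i ≤ t then (1 : ℝ) else 0) + ∑ j : Fin n, (if t < u j then 1 else 0) = n := by
  rw [← Finset.sum_add_distrib]
  simp [ite_add_ite, ← not_lt]

theorem empirical_sub_sq_eq {n : ℕ} (hn : n ≠ 0) {u : Fin n → ℝ} (hu : Monotone u) (t : ℝ) :
    ((n : ℝ)⁻¹ * ∑ i, (if u i ≤ t then (1 : ℝ) else 0) - t) ^ 2
      = (1 - t) ^ 2 + (n : ℝ)⁻¹ * ∑ j : Fin n,
          (2 * t - (2 * (j : ℝ) + 1) / n) * (if t < u j then 1 else 0) := by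
  have hsq := sq_sum_ite_le_add_sum_ite_lt hu t
  have hsum := sum_ite_le_add_sum_ite_lt u t
  simp only [sub_mul, Finset.sum_sub_distrib, ← Finset.mul_sum, div_mul_eq_mul_div,
    ← Finset.sum_div] at hsq ⊢
  field_simp
  linear_combination (-(n : ℝ) * 2 * t) * hsum + hsq

noncomputable def betaKernel (a c t : ℝ) : ℝ := t ^ (a - 1) * (1 - t) ^ (c - 1)

theorem mul_betaKernel {a : ℝ} (ha : a ≠ 0) (c : ℝ) {t : ℝ} (ht : 0 ≤ t) :
    t * betaKernel a c t = betaKernel (a + 1) c t := by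
  rw [betaKernel, betaKernel, add_sub_right_comm, Real.rpow_add_one' ht (by simpa using ha)]
  ring

theorem one_sub_sq_mul_betaKernel (a : ℝ) {c : ℝ} (hc : 0 < c) {t : ℝ} (ht : t ≤ 1) :
    (1 - t) ^ 2 * betaKernel a c t = betaKernel a (c + 2) t := by
  rw [betaKernel, betaKernel, show c + 2 - 1 = c - 1 + (2 : ℕ) by push_cast; ring,
    Real.rpow_add_natCast' (by linarith) (by push_cast; linarith)]
  ring

theorem intervalIntegrable_betaKernel {a c : ℝ} (ha : 0 < a) (hc : 0 < c) :
    IntervalIntegrable (betaKernel a c) volume 0 1 := by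
  have left : IntervalIntegrable (betaKernel a c) volume 0 (1 / 2) := by
    refine (intervalIntegrable_rpow' (by linarith : (-1 : ℝ) < a - 1)).mul_continuousOn ?_
    refine ContinuousOn.rpow_const (by fun_prop) fun t ht => Or.inl ?_
    rw [uIcc_of_le (by norm_num)] at ht
    linarith [ht.2]
  have right : IntervalIntegrable (betaKernel a c) volume (1 / 2) 1 := by
    have h := (intervalIntegrable_rpow' (by linarith : (-1 : ℝ) < c - 1)
      (a := 0) (b := 1 / 2)).comp_sub_left 1
    norm_num at h
    refine h.symm.continuousOn_mul (ContinuousOn.rpow_const (by fun_prop) fun t ht => Or.inl ?_)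
    rw [uIcc_of_le (by norm_num)] at ht
    linarith [ht.1]
  exact left.trans right

theorem empirical_sub_sq_mul_betaKernel {n : ℕ} (hn : n ≠ 0) {u : Fin n → ℝ} (hu : Monotone u)
    {α β : ℝ} (hα : α ≠ 0) (hβ : 0 < β) {t : ℝ} (ht : t ∈ Icc (0 : ℝ) 1) :
    ((n : ℝ)⁻¹ * ∑ i, (if u i ≤ t then (1 : ℝ) else 0) - t) ^ 2 * betaKernel α β t
      = betaKernel α (β + 2) t + (n : ℝ)⁻¹ * ∑ j : Fin n,
          (2 * ((if t < u j then 1 else 0) * betaKernel (α + 1) β t)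
            - (2 * (j : ℝ) + 1) / n * ((if t < u j then 1 else 0) * betaKernel α β t)) := by
  rw [empirical_sub_sq_eq hn hu, ← one_sub_sq_mul_betaKernel α hβ ht.2,
    ← mul_betaKernel hα β ht.1]
  simp only [add_mul, Finset.sum_mul, Finset.mul_sum, mul_assoc]
  congr 1
  exact Finset.sum_congr rfl fun j _ => by ring

theorem IntervalIntegrable.ite_lt_mul {f : ℝ → ℝ} {a b : ℝ} (hf : IntervalIntegrable f volume a b)
    (x : ℝ) : IntervalIntegrable (fun t => (if t < x then 1 else 0) * f t) volume a b := by
  have h : (fun t => (if t < x then 1 else 0) * f t) = (Iio x).indicator f := by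
    ext t
    by_cases h : t < x <;> simp [h]
  rw [h]
  exact ⟨hf.1.indicator measurableSet_Iio, hf.2.indicator measurableSet_Iio⟩

theorem integral_ite_lt_mul {f : ℝ → ℝ} {a b x : ℝ} (hx : x ∈ Icc a b) :
    ∫ t in a..b, (if t < x then 1 else 0) * f t = ∫ t in a..x, f t := by
  rw [← integral_indicator hx]
  refine integral_congr_ae ?_
  filter_upwards [Measure.ae_ne volume x] with t ht _
  rcases ht.lt_or_gt with h | h <;> simp [h, h.le, h.not_ge, h.not_gt, indicator]

/-- for `α, β > 0` and sorted points `0 ≤ u_(1) ≤ … ≤ u_(n) ≤ 1` with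
empirical d.f. `G_n`,
`∫₀¹ (G_n(t) - t)² t^{α-1} (1-t)^{β-1} dt
  = (1/n) ∑_j [2 B(u_(j); α+1, β) - ((2j-1)/n) B(u_(j); α, β)] + B(α, β+2)`. -/
theorem stmt17 (n : ℕ) (hn : 1 ≤ n) (α β : ℝ) (hα : 0 < α) (hβ : 0 < β)
    (u : Fin n → ℝ) (hmono : Monotone u) (hmem : ∀ i, u i ∈ Set.Icc (0 : ℝ) 1) :
    ∫ t in (0 : ℝ)..1,
        (((n : ℝ)⁻¹ * ∑ i : Fin n, (if u i ≤ t then (1 : ℝ) else 0)) - t) ^ 2 *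
          (t ^ (α - 1) * (1 - t) ^ (β - 1))
      = (n : ℝ)⁻¹ * (∑ j : Fin n,
            (2 * incBeta (u j) (α + 1) β
              - ((2 * ((j : ℕ) : ℝ) + 1) / (n : ℝ)) * incBeta (u j) α β))
        + incBeta 1 α (β + 2) := by
  have hψ := intervalIntegrable_betaKernel hα hβ
  have hψ' := intervalIntegrable_betaKernel (add_pos hα one_pos) hβ
  have hsummand : ∀ j ∈ Finset.univ, IntervalIntegrable (fun t =>
      2 * ((if t < u j then 1 else 0) * betaKernel (α + 1) β t)
        - (2 * (j : ℝ) + 1) / n * ((if t < u j then 1 else 0) * betaKernel α β t)) volume 0 1 :=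
    fun j _ => ((hψ'.ite_lt_mul _).const_mul 2).sub ((hψ.ite_lt_mul _).const_mul _)
  change ∫ t in (0 : ℝ)..1, _ * betaKernel α β t = _
  rw [integral_congr fun t ht => empirical_sub_sq_mul_betaKernel (by omega) hmono hα.ne' hβ
      (by rwa [uIcc_of_le zero_le_one] at ht),
    integral_add (intervalIntegrable_betaKernel hα (add_pos hβ two_pos)),
    intervalIntegral.integral_const_mul, integral_finsetSum hsummand, add_comm]
  · congr 2
    refine Finset.sum_congr rfl fun j _ => ?_
    rw [integral_sub ((hψ'.ite_lt_mul _).const_mul 2) ((hψ.ite_lt_mul _).const_mul _),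
      intervalIntegral.integral_const_mul, intervalIntegral.integral_const_mul,
      integral_ite_lt_mul (hmem j), integral_ite_lt_mul (hmem j)]
    rfl
  · simpa only [Finset.sum_fn] using (IntervalIntegrable.sum _ hsummand).const_mul (n : ℝ)⁻¹
end
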